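/- arXiv:1504.07621 — 9 statements merged into one kernel-verified Lean document; each statement's English description precedes it below -/
import Mathlib

section
/- Let n, m be positive integers, let D : {0,1}^n × {0,1}^m → [0,1], let Z be a random variable on {0,1}^m with P_Z(z) > 0 for every z, let 0 < k, and let Y*|Z be a conditional distribution over {0,1}^n given Z with average min-entropy ˜H∞(Y*|Z) = k. Then Y*|Z attains the maximum of E D(Y,Z) over all conditional distributions Y|Z with ˜H∞(Y|Z) ≥ k if and only if there exist real numbers t(z) (one for each z ∈ {0,1}^m) and a real number λ ≥ 0 such that for every z: (a) ∑_{x∈{0,1}^n} max(D(x,z) − t(z), 0) = λ; (b) if 0 < P_{Y*|Z=z}(x) < max_{x'} P_{Y*|Z=z}(x') then D(x,z) = t(z); (c) if P_{Y*|Z=z}(x) = 0 then D(x,z) ≤ t(z); (d) if P_{Y*|Z=z}(x) = max_{x'} P_{Y*|Z=z}(x') then D(x,z) ≥ t(z). -/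
open Finset

/-- Bitstrings of length `n`. -/
abbrev BS (n : ℕ) := Fin n → Bool

/-- `p` is a probability distribution on the finite type `α`. -/
def IsDist {α : Type*} [Fintype α] (p : α → ℝ) : Prop :=
  (∀ a, 0 ≤ p a) ∧ ∑ a, p a = 1

/-- `P` is a conditional distribution on `α` given `β`. -/
def IsCondDist {α β : Type*} [Fintype α] (P : β → α → ℝ) : Prop :=
  ∀ z, IsDist (P z)

/-- The maximal probability `max_x p x`. -/
noncomputable def maxProb {α : Type*} [Fintype α] [Nonempty α] (p : α → ℝ) : ℝ :=
  ⨆ a, p a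

/-- Average (conditional) min-entropy `˜H∞(Y|Z) = −log₂ ∑_z P_Z(z)·max_x P_{Y|Z=z}(x)`. -/
noncomputable def avgMinEntropy {n m : ℕ} (PZ : BS m → ℝ) (PY : BS m → BS n → ℝ) : ℝ :=
  - Real.logb 2 (∑ z, PZ z * maxProb (PY z))

/-- `E D(Y,Z) = ∑_{z,x} P_Z(z)·P_{Y|Z=z}(x)·D(x,z)`. -/
noncomputable def condExp {n m : ℕ} (PZ : BS m → ℝ) (PY : BS m → BS n → ℝ)
    (D : BS n → BS m → ℝ) : ℝ :=
  ∑ z, ∑ x, PZ z * PY z x * D x z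

/-- `p` is a joint probability distribution on `α × β`. -/
def IsJointDist {α β : Type*} [Fintype α] [Fintype β] (p : α → β → ℝ) : Prop :=
  (∀ a b, 0 ≤ p a b) ∧ ∑ a, ∑ b, p a b = 1

/-- Marginal distribution of `Z` from the joint distribution of `(X,Z)`. -/
noncomputable def margZ {n m : ℕ} (PXZ : BS n → BS m → ℝ) : BS m → ℝ :=
  fun z => ∑ x, PXZ x z

/-- `E D(X,Z) = ∑_{x,z} P_{X,Z}(x,z)·D(x,z)`. -/
noncomputable def jointExp {n m : ℕ} (PXZ : BS n → BS m → ℝ)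
    (D : BS n → BS m → ℝ) : ℝ :=
  ∑ x, ∑ z, PXZ x z * D x z


namespace KKTAux

open Finset
open scoped Classical

variable {α : Type*} [Fintype α] [Nonempty α]

theorem le_maxProb (p : α → ℝ) (a : α) : p a ≤ maxProb p :=
  le_ciSup (Set.Finite.bddAbove (Set.finite_range p)) a

theorem maxProb_le {p : α → ℝ} {c : ℝ} (h : ∀ a, p a ≤ c) : maxProb p ≤ c := ciSup_le h

theorem exists_eq_maxProb (p : α → ℝ) : ∃ a, p a = maxProb p := by
  obtain ⟨a, -, ha⟩ := Finset.exists_max_image univ p univ_nonempty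
  exact ⟨a, le_antisymm (le_maxProb p a) (maxProb_le fun b => ha b (mem_univ b))⟩

theorem maxProb_pos {p : α → ℝ} (hp : IsDist p) : 0 < maxProb p := by
  by_contra h
  push_neg at h
  have h1 : ∑ a, p a ≤ 0 := Finset.sum_nonpos fun a _ => (le_maxProb p a).trans h
  rw [hp.2] at h1; linarith

set_option linter.unusedSectionVars false

/-- difference of sums over a finite type differing at one point -/
theorem sum_diff_single {γ : Type*} [Fintype γ] [DecidableEq γ] (F G : γ → ℝ) (z : γ)
    (h : ∀ z', z' ≠ z → F z' = G z') :
    ∑ z', F z' = ∑ z', G z' + (F z - G z) := by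
  rw [← Finset.sum_erase_add univ F (mem_univ z), ← Finset.sum_erase_add univ G (mem_univ z)]
  rw [Finset.sum_congr rfl (fun x hx => h x (Finset.ne_of_mem_erase hx))]
  ring

theorem sum_diff_pair {γ : Type*} [Fintype γ] [DecidableEq γ] (F G : γ → ℝ) (z1 z2 : γ)
    (h12 : z1 ≠ z2) (h : ∀ z', z' ≠ z1 → z' ≠ z2 → F z' = G z') :
    ∑ z', F z' = ∑ z', G z' + (F z1 - G z1) + (F z2 - G z2) := by
  classical
  set F' : γ → ℝ := Function.update F z1 (G z1) with hF'
  have h1 : ∑ z', F z' = ∑ z', F' z' + (F z1 - G z1) := by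
    rw [sum_diff_single F F' z1 (fun z' hz' => by simp [hF', Function.update_of_ne hz'])]
    simp [hF']
  have h2 : ∑ z', F' z' = ∑ z', G z' + (F z2 - G z2) := by
    have hside : ∀ z', z' ≠ z2 → F' z' = G z' := by
      intro z' hz'
      by_cases hz1 : z' = z1
      · subst hz1; simp [hF']
      · rw [hF', Function.update_of_ne hz1]; exact h z' hz1 hz'
    rw [sum_diff_single F' G z2 hside, hF', Function.update_of_ne (Ne.symm h12)]
  rw [h1, h2]; ring

variable {n m : ℕ}

theorem S_pos {PZ : BS m → ℝ} (hPZpos : ∀ z, 0 < PZ z) {PY : BS m → BS n → ℝ}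
    (hPY : IsCondDist PY) : 0 < ∑ z, PZ z * maxProb (PY z) :=
  Finset.sum_pos (fun z _ => mul_pos (hPZpos z) (maxProb_pos (hPY z))) univ_nonempty

/-- entropy comparison in terms of the sums -/
theorem ent_le_ent_iff {PZ : BS m → ℝ} (hPZpos : ∀ z, 0 < PZ z)
    {PY PY' : BS m → BS n → ℝ} (hPY : IsCondDist PY) (hPY' : IsCondDist PY') :
    avgMinEntropy PZ PY' ≤ avgMinEntropy PZ PY ↔
      ∑ z, PZ z * maxProb (PY z) ≤ ∑ z, PZ z * maxProb (PY' z) := by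
  unfold avgMinEntropy
  rw [neg_le_neg_iff, Real.logb, Real.logb, div_le_div_iff_of_pos_right (Real.log_pos one_lt_two),
    Real.log_le_log_iff (S_pos hPZpos hPY) (S_pos hPZpos hPY')]

theorem condExp_eq {PZ : BS m → ℝ} {PY : BS m → BS n → ℝ} {D : BS n → BS m → ℝ} :
    condExp PZ PY D = ∑ z, PZ z * ∑ x, PY z x * D x z := by
  unfold condExp
  exact Finset.sum_congr rfl fun z _ => by
    rw [Finset.mul_sum]; exact Finset.sum_congr rfl fun x _ => by ring

/-- key upper bound: for any distribution `p` with values capped by its max. -/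
theorem inner_ub {p : α → ℝ} (hp : IsDist p) (Dz : α → ℝ) (t lam : ℝ)
    (ha : ∑ x, max (Dz x - t) 0 = lam) :
    ∑ x, p x * Dz x ≤ t + lam * maxProb p := by
  have h1 : ∀ x, p x * Dz x ≤ p x * t + maxProb p * max (Dz x - t) 0 := by
    intro x
    have h2 : p x * (Dz x - t) ≤ p x * max (Dz x - t) 0 :=
      mul_le_mul_of_nonneg_left (le_max_left _ _) (hp.1 x)
    have h3 : p x * max (Dz x - t) 0 ≤ maxProb p * max (Dz x - t) 0 :=
      mul_le_mul_of_nonneg_right (le_maxProb p x) (le_max_right _ _)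
    nlinarith [hp.1 x]
  calc ∑ x, p x * Dz x ≤ ∑ x, (p x * t + maxProb p * max (Dz x - t) 0) :=
        Finset.sum_le_sum fun x _ => h1 x
    _ = t + lam * maxProb p := by
        rw [Finset.sum_add_distrib, ← Finset.sum_mul, ← Finset.mul_sum, hp.2, ha]; ring

/-- equality for the optimal distribution satisfying the KKT conditions -/
theorem inner_eq {q : α → ℝ} (hq : IsDist q) (Dz : α → ℝ) (t lam : ℝ)
    (ha : ∑ x, max (Dz x - t) 0 = lam)
    (hb : ∀ x, 0 < q x → q x < maxProb q → Dz x = t)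
    (hc : ∀ x, q x = 0 → Dz x ≤ t)
    (hd : ∀ x, q x = maxProb q → t ≤ Dz x) :
    ∑ x, q x * Dz x = t + lam * maxProb q := by
  have h1 : ∀ x, q x * Dz x = q x * t + maxProb q * max (Dz x - t) 0 := by
    intro x
    rcases (hq.1 x).eq_or_lt with h0 | h0
    · rw [max_eq_right (by linarith [hc x h0.symm]), ← h0]; ring
    · rcases (le_maxProb q x).eq_or_lt with hM | hM
      · rw [max_eq_left (by linarith [hd x hM]), hM]; ring
      · rw [hb x h0 hM]; simp
  rw [Finset.sum_congr rfl fun x _ => h1 x, Finset.sum_add_distrib, ← Finset.sum_mul,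
    ← Finset.mul_sum, hq.2, ha]; ring

theorem f_nonneg (Dz : α → ℝ) (t : ℝ) : 0 ≤ ∑ x, max (Dz x - t) 0 :=
  Finset.sum_nonneg fun _x _ => le_max_right _ _

theorem f_anti (Dz : α → ℝ) {t t' : ℝ} (h : t ≤ t') :
    ∑ x, max (Dz x - t') 0 ≤ ∑ x, max (Dz x - t) 0 :=
  Finset.sum_le_sum fun x _ => max_le_max (by linarith) le_rfl

theorem f_cont (Dz : α → ℝ) : Continuous fun t : ℝ => ∑ x, max (Dz x - t) 0 :=
  continuous_finset_sum _ fun _x _ => ((continuous_const.sub continuous_id).max continuous_const)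

theorem f_eq_sum_filter (Dz : α → ℝ) (t : ℝ) (P : α → Prop) [DecidablePred P]
    (h1 : ∀ x, P x → t ≤ Dz x) (h2 : ∀ x, ¬ P x → Dz x ≤ t) :
    ∑ x, max (Dz x - t) 0 = ∑ x ∈ univ.filter P, (Dz x - t) := by
  rw [← Finset.sum_filter_add_sum_filter_not univ P]
  have hz : ∑ x ∈ univ.filter (fun x => ¬ P x), max (Dz x - t) 0 = 0 :=
    Finset.sum_eq_zero fun x hx =>
      max_eq_right (by linarith [h2 x (Finset.mem_filter.mp hx).2])
  rw [hz, add_zero]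
  exact Finset.sum_congr rfl fun x hx =>
    max_eq_left (by linarith [h1 x (Finset.mem_filter.mp hx).2])

theorem f_large (Dz : α → ℝ) (hDz : ∀ x, 0 ≤ Dz x) {c t : ℝ} (hc : 0 ≤ c) (ht : t ≤ -c) :
    c ≤ ∑ x, max (Dz x - t) 0 := by
  have h1 : ∀ x ∈ (univ : Finset α), c ≤ max (Dz x - t) 0 := by
    intro x _
    have := hDz x
    exact le_max_of_le_left (by linarith)
  calc c = (1:ℝ) * c := (one_mul c).symm
    _ ≤ (Fintype.card α : ℝ) * c := by
        have : (1:ℝ) ≤ (Fintype.card α : ℝ) := by exact_mod_cast Fintype.card_pos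
        nlinarith
    _ = ∑ _x : α, c := by rw [Finset.sum_const, nsmul_eq_mul, Fintype.card]
    _ ≤ ∑ x, max (Dz x - t) 0 := Finset.sum_le_sum h1

/-- Perturbation increasing the cap: gain `δ * f(U)`. -/
theorem gain_perturb {q : α → ℝ} (hq : IsDist q) (Dz : α → ℝ) {x0 : α} {U δ : ℝ}
    (hx0 : 0 < q x0) (hDx0 : Dz x0 = U)
    (hδ : 0 < δ)
    (hδ2 : ((univ.filter fun x => U < Dz x).card : ℝ) * δ ≤ q x0) :
    ∃ p : α → ℝ, IsDist p ∧ maxProb p ≤ maxProb q + δ ∧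
      ∑ x, p x * Dz x = ∑ x, q x * Dz x + δ * ∑ x, max (Dz x - U) 0 := by
  set A := univ.filter fun x => U < Dz x with hA
  set p : α → ℝ := fun u => q u + (if U < Dz u then δ else 0)
      - (if u = x0 then (A.card : ℝ) * δ else 0) with hp
  have hx0A : ¬ (U < Dz x0) := by rw [hDx0]; exact lt_irrefl U
  have hsum1 : ∑ u, (if U < Dz u then δ else 0) = (A.card : ℝ) * δ := by
    rw [Finset.sum_ite, Finset.sum_const, Finset.sum_const, nsmul_eq_mul]; simp [hA]
  have hsum2 : ∑ u, (if u = x0 then (A.card : ℝ) * δ else 0) = (A.card : ℝ) * δ := by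
    simp
  refine ⟨p, ⟨?_, ?_⟩, ?_, ?_⟩
  · intro u
    by_cases hu : u = x0
    · subst hu
      simp only [hp, if_neg hx0A]
      simpa using hδ2
    · simp only [hp, if_neg hu]
      have := hq.1 u
      split <;> [linarith; linarith]
  · simp only [hp, Finset.sum_sub_distrib, Finset.sum_add_distrib, hsum1, hsum2, hq.2]
    ring
  · apply maxProb_le
    intro u
    by_cases hu : u = x0
    · subst hu
      simp only [hp, if_neg hx0A, eq_self_iff_true, if_true]
      have h1 : (0:ℝ) ≤ (A.card : ℝ) * δ := by positivity
      have := le_maxProb q u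
      linarith
    · simp only [hp, if_neg hu]
      have := le_maxProb q u
      split <;> [linarith; linarith]
  · have key : ∀ u, p u * Dz u
        = q u * Dz u + (if U < Dz u then δ * Dz u else 0)
          - (if u = x0 then (A.card : ℝ) * δ * U else 0) := by
      intro u
      by_cases hu : u = x0
      · subst hu
        rw [hp]
        simp only [if_neg hx0A, eq_self_iff_true, if_true, hDx0, if_neg (lt_irrefl U)]
        ring
      · simp only [hp, if_neg hu]
        split <;> ring
    rw [Finset.sum_congr rfl fun u _ => key u, Finset.sum_sub_distrib,
      Finset.sum_add_distrib]
    have e1 : ∑ u, (if U < Dz u then δ * Dz u else 0) = δ * ∑ u ∈ A, Dz u := by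
      rw [Finset.sum_ite, Finset.sum_const, Finset.mul_sum]; simp [hA]
    have e2 : ∑ u, (if u = x0 then (A.card : ℝ) * δ * U else 0) = (A.card : ℝ) * δ * U := by
      simp
    have e3 : ∑ x, max (Dz x - U) 0 = ∑ x ∈ A, (Dz x - U) :=
      f_eq_sum_filter Dz U (fun x => U < Dz x) (fun x hx => hx.le)
        (fun x hx => le_of_not_gt hx)
    rw [e1, e2, e3, Finset.sum_sub_distrib, Finset.sum_const, nsmul_eq_mul]
    ring

/-- Perturbation decreasing the cap: loss `ε * f(L)` where `L = Dz y0`. -/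
theorem loss_perturb {q : α → ℝ} (hq : IsDist q) (Dz : α → ℝ) {y0 : α} {ε : ℝ}
    (hy0 : q y0 < maxProb q)
    (hL : ∀ x, q x < maxProb q → Dz x ≤ Dz y0)
    (hU : ∀ x, q x = maxProb q → Dz y0 ≤ Dz x)
    (hε : 0 < ε)
    (hε2 : ∀ u, q u < maxProb q →
      q u + (((univ.filter fun x => q x = maxProb q).card : ℝ) + 1) * ε ≤ maxProb q) :
    ∃ p : α → ℝ, IsDist p ∧ maxProb p ≤ maxProb q - ε ∧
      ∑ x, p x * Dz x = ∑ x, q x * Dz x - ε * ∑ x, max (Dz x - Dz y0) 0 := by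
  set M := maxProb q with hM
  set A := univ.filter fun x => q x = M with hA
  set k : ℝ := (A.card : ℝ) with hk
  have hknn : (0:ℝ) ≤ k := by positivity
  have hy0A : ¬ (q y0 = M) := ne_of_lt hy0
  have hεM : ε ≤ M := by
    have h := hε2 y0 hy0
    have := hq.1 y0
    nlinarith
  set p : α → ℝ := fun u => q u - (if q u = M then ε else 0)
      + (if u = y0 then k * ε else 0) with hp
  have hsum1 : ∑ u, (if q u = M then ε else 0) = k * ε := by
    rw [Finset.sum_ite, Finset.sum_const, Finset.sum_const, nsmul_eq_mul]; simp [hA, hk]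
  have hsum2 : ∑ u, (if u = y0 then k * ε else 0) = k * ε := by simp
  refine ⟨p, ⟨?_, ?_⟩, ?_, ?_⟩
  · intro u
    by_cases hu : u = y0
    · subst hu
      simp only [hp, if_neg hy0A, eq_self_iff_true, if_true]
      have := hq.1 u
      nlinarith
    · simp only [hp, if_neg hu, add_zero]
      have := hq.1 u
      split
      · next h => rw [h]; linarith
      · linarith
  · simp only [hp, Finset.sum_sub_distrib, Finset.sum_add_distrib, hsum1, hsum2, hq.2]
    ring
  · apply maxProb_le
    intro u
    by_cases hu : u = y0
    · subst hu
      simp only [hp, if_neg hy0A, eq_self_iff_true, if_true]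
      have h := hε2 u hy0
      linarith
    · simp only [hp, if_neg hu, add_zero]
      split
      · next h => rw [h]
      · next h =>
        have hlt : q u < M := lt_of_le_of_ne (le_maxProb q u) h
        have h2 := hε2 u hlt
        nlinarith
  · have key : ∀ u, p u * Dz u
        = q u * Dz u - (if q u = M then ε * Dz u else 0)
          + (if u = y0 then k * ε * Dz y0 else 0) := by
      intro u
      by_cases hu : u = y0
      · subst hu
        simp only [hp, if_neg hy0A, eq_self_iff_true, if_true]; ring
      · simp only [hp, if_neg hu, add_zero]
        split <;> ring
    rw [Finset.sum_congr rfl fun u _ => key u, Finset.sum_add_distrib,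
      Finset.sum_sub_distrib]
    have e1 : ∑ u, (if q u = M then ε * Dz u else 0) = ε * ∑ u ∈ A, Dz u := by
      rw [Finset.sum_ite, Finset.sum_const, Finset.mul_sum]; simp [hA]
    have e2 : ∑ u, (if u = y0 then k * ε * Dz y0 else 0) = k * ε * Dz y0 := by simp
    have e3 : ∑ x, max (Dz x - Dz y0) 0 = ∑ x ∈ A, (Dz x - Dz y0) :=
      f_eq_sum_filter Dz (Dz y0) (fun x => q x = M) (fun x hx => hU x hx)
        (fun x hx => hL x (lt_of_le_of_ne (le_maxProb q x) hx))
    rw [e1, e2, e3, Finset.sum_sub_distrib, Finset.sum_const, nsmul_eq_mul]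
    ring

/-- moving mass `ε` from `x` to `y` within the cap -/
theorem move_mass {q : α → ℝ} (hq : IsDist q) {x y : α} (hx : 0 < q x)
    (hy : q y < maxProb q) (hxy : x ≠ y) :
    ∃ p : α → ℝ, IsDist p ∧ maxProb p ≤ maxProb q ∧ ∃ ε : ℝ, 0 < ε ∧
      ∀ Dz : α → ℝ, ∑ u, p u * Dz u = ∑ u, q u * Dz u + ε * (Dz y - Dz x) := by
  set M := maxProb q with hM
  set ε := min (q x) (M - q y) with hεdef
  have hεpos : 0 < ε := lt_min hx (by linarith)
  have hεx : ε ≤ q x := min_le_left _ _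
  have hεy : ε ≤ M - q y := min_le_right _ _
  set p : α → ℝ := fun u => q u + (if u = y then ε else 0) - (if u = x then ε else 0) with hp
  refine ⟨p, ⟨?_, ?_⟩, ?_, ε, hεpos, ?_⟩
  · intro u
    by_cases hu : u = x
    · subst hu
      simp only [hp, if_neg hxy, eq_self_iff_true, if_true, add_zero]
      linarith
    · simp only [hp, if_neg hu, sub_zero]
      have := hq.1 u
      split <;> linarith
  · have e1 : ∑ u, (if u = y then ε else 0) = ε := by simp
    have e2 : ∑ u, (if u = x then ε else 0) = ε := by simp
    simp only [hp, Finset.sum_sub_distrib, Finset.sum_add_distrib, e1, e2, hq.2]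
    ring
  · apply maxProb_le
    intro u
    by_cases hu : u = x
    · subst hu
      simp only [hp, if_neg hxy, eq_self_iff_true, if_true, add_zero]
      have := le_maxProb q u
      linarith
    · simp only [hp, if_neg hu, sub_zero]
      by_cases huy : u = y
      · subst huy
        simp only [eq_self_iff_true, if_true]
        linarith
      · simp only [if_neg huy, add_zero]
        exact le_maxProb q u
  · intro Dz
    have key : ∀ u, p u * Dz u
        = q u * Dz u + (if u = y then ε * Dz u else 0) - (if u = x then ε * Dz u else 0) := by
      intro u
      simp only [hp]
      split_ifs <;> ring
    have e1 : ∑ u, (if u = y then ε * Dz u else 0) = ε * Dz y := by simp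
    have e2 : ∑ u, (if u = x then ε * Dz u else 0) = ε * Dz x := by simp
    rw [Finset.sum_congr rfl fun u _ => key u, Finset.sum_sub_distrib,
      Finset.sum_add_distrib, e1, e2]
    ring

/-- comparison from optimality: single-coordinate update -/
theorem single_update {n m : ℕ} {PZ : BS m → ℝ} (hPZpos : ∀ z, 0 < PZ z)
    {PYs : BS m → BS n → ℝ} (hPYs : IsCondDist PYs) {D : BS n → BS m → ℝ}
    (Hopt : ∀ PY : BS m → BS n → ℝ, IsCondDist PY →
      (∑ z, PZ z * maxProb (PY z)) ≤ (∑ z, PZ z * maxProb (PYs z)) →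
      condExp PZ PY D ≤ condExp PZ PYs D)
    (z : BS m) {p : BS n → ℝ} (hp : IsDist p) (hmax : maxProb p ≤ maxProb (PYs z)) :
    ∑ x, p x * D x z ≤ ∑ x, PYs z x * D x z := by
  classical
  set PY' := Function.update PYs z p with hPY'def
  have hupd : ∀ z', z' ≠ z → PY' z' = PYs z' := fun z' h => Function.update_of_ne h _ _
  have hupdz : PY' z = p := Function.update_self _ _ _
  have hPY' : IsCondDist PY' := by
    intro z'
    rcases eq_or_ne z' z with h | h
    · subst h; rw [hupdz]; exact hp
    · rw [hupd z' h]; exact hPYs z'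
  have hS : (∑ z', PZ z' * maxProb (PY' z')) ≤ ∑ z', PZ z' * maxProb (PYs z') := by
    rw [sum_diff_single (fun z' => PZ z' * maxProb (PY' z'))
      (fun z' => PZ z' * maxProb (PYs z')) z (fun z' h => by simp only [hupd z' h])]
    simp only [hupdz]
    have := mul_le_mul_of_nonneg_left hmax (hPZpos z).le
    linarith
  have hC := Hopt PY' hPY' hS
  rw [condExp_eq, condExp_eq] at hC
  rw [sum_diff_single (fun z' => PZ z' * ∑ x, PY' z' x * D x z')
    (fun z' => PZ z' * ∑ x, PYs z' x * D x z') z (fun z' h => by simp only [hupd z' h])] at hC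
  simp only [hupdz] at hC
  have h2 : PZ z * (∑ x, p x * D x z) ≤ PZ z * ∑ x, PYs z x * D x z := by linarith
  exact le_of_mul_le_mul_left h2 (hPZpos z)

/-- comparison from optimality: two-coordinate update -/
theorem double_update {n m : ℕ} {PZ : BS m → ℝ} (hPZpos : ∀ z, 0 < PZ z)
    {PYs : BS m → BS n → ℝ} (hPYs : IsCondDist PYs) {D : BS n → BS m → ℝ}
    (Hopt : ∀ PY : BS m → BS n → ℝ, IsCondDist PY →
      (∑ z, PZ z * maxProb (PY z)) ≤ (∑ z, PZ z * maxProb (PYs z)) →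
      condExp PZ PY D ≤ condExp PZ PYs D)
    (z1 z2 : BS m) (h12 : z1 ≠ z2) {p1 p2 : BS n → ℝ}
    (hp1 : IsDist p1) (hp2 : IsDist p2)
    (hmax : PZ z1 * maxProb p1 + PZ z2 * maxProb p2 ≤
      PZ z1 * maxProb (PYs z1) + PZ z2 * maxProb (PYs z2)) :
    PZ z1 * ∑ x, p1 x * D x z1 + PZ z2 * ∑ x, p2 x * D x z2 ≤
      PZ z1 * ∑ x, PYs z1 x * D x z1 + PZ z2 * ∑ x, PYs z2 x * D x z2 := by
  classical
  set PY' := Function.update (Function.update PYs z1 p1) z2 p2 with hPY'def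
  have hupd : ∀ z', z' ≠ z1 → z' ≠ z2 → PY' z' = PYs z' := fun z' h1 h2 => by
    rw [hPY'def, Function.update_of_ne h2, Function.update_of_ne h1]
  have hz1 : PY' z1 = p1 := by
    rw [hPY'def, Function.update_of_ne h12, Function.update_self]
  have hz2 : PY' z2 = p2 := Function.update_self _ _ _
  have hPY' : IsCondDist PY' := by
    intro z'
    rcases eq_or_ne z' z1 with h | h
    · subst h; rw [hz1]; exact hp1
    · rcases eq_or_ne z' z2 with h' | h'
      · subst h'; rw [hz2]; exact hp2
      · rw [hupd z' h h']; exact hPYs z'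
  have hS : (∑ z', PZ z' * maxProb (PY' z')) ≤ ∑ z', PZ z' * maxProb (PYs z') := by
    rw [sum_diff_pair (fun z' => PZ z' * maxProb (PY' z'))
      (fun z' => PZ z' * maxProb (PYs z')) z1 z2 h12
      (fun z' h h' => by simp only [hupd z' h h'])]
    simp only [hz1, hz2]
    linarith
  have hC := Hopt PY' hPY' hS
  rw [condExp_eq, condExp_eq] at hC
  rw [sum_diff_pair (fun z' => PZ z' * ∑ x, PY' z' x * D x z')
    (fun z' => PZ z' * ∑ x, PYs z' x * D x z') z1 z2 h12
    (fun z' h h' => by simp only [hupd z' h h'])] at hC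
  simp only [hz1, hz2] at hC
  linarith

end KKTAux

set_option maxHeartbeats 2000000 in
/-- Characterization of conditional distributions maximizing the expectation of a
distinguisher under an average min-entropy constraint. -/
theorem stmt_0 (n m : ℕ) (hn : 0 < n) (hm : 0 < m)
    (D : BS n → BS m → ℝ) (hD : ∀ x z, D x z ∈ Set.Icc (0:ℝ) 1)
    (PZ : BS m → ℝ) (hPZ : IsDist PZ) (hPZpos : ∀ z, 0 < PZ z)
    (k : ℝ) (hk : 0 < k)
    (PYs : BS m → BS n → ℝ) (hPYs : IsCondDist PYs)
    (hent : avgMinEntropy PZ PYs = k) :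
    (∀ PY : BS m → BS n → ℝ, IsCondDist PY → k ≤ avgMinEntropy PZ PY →
        condExp PZ PY D ≤ condExp PZ PYs D) ↔
    (∃ (t : BS m → ℝ) (lam : ℝ), 0 ≤ lam ∧ ∀ z,
        (∑ x, max (D x z - t z) 0 = lam) ∧
        (∀ x, 0 < PYs z x → PYs z x < maxProb (PYs z) → D x z = t z) ∧
        (∀ x, PYs z x = 0 → D x z ≤ t z) ∧
        (∀ x, PYs z x = maxProb (PYs z) → t z ≤ D x z)) := by
  classical
  constructor
  · -- forward direction
    intro Hopt0
    have Hopt : ∀ PY : BS m → BS n → ℝ, IsCondDist PY →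
        (∑ z, PZ z * maxProb (PY z)) ≤ (∑ z, PZ z * maxProb (PYs z)) →
        condExp PZ PY D ≤ condExp PZ PYs D := by
      intro PY hPY hS
      refine Hopt0 PY hPY ?_
      rw [← hent]
      exact (KKTAux.ent_le_ent_iff hPZpos hPY hPYs).mpr hS
    have hMpos : ∀ z, 0 < maxProb (PYs z) := fun z => KKTAux.maxProb_pos (hPYs z)
    -- exchange property
    have exch : ∀ z x y, 0 < PYs z x → PYs z y < maxProb (PYs z) → D y z ≤ D x z := by
      intro z x y hx hy
      rcases eq_or_ne x y with rfl | hxy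
      · exact le_rfl
      obtain ⟨p, hp, hpmax, ε, hε, hval⟩ := KKTAux.move_mass (hPYs z) hx hy hxy
      have hcmp := KKTAux.single_update hPZpos hPYs Hopt z hp hpmax
      rw [hval (fun u => D u z)] at hcmp
      nlinarith
    -- support minimum U
    set supp : BS m → Finset (BS n) := fun z => univ.filter fun x => 0 < PYs z x
      with hsuppdef
    have hsupp : ∀ z, (supp z).Nonempty := by
      intro z
      obtain ⟨a, ha⟩ := KKTAux.exists_eq_maxProb (PYs z)
      exact ⟨a, Finset.mem_filter.mpr ⟨Finset.mem_univ a, by rw [ha]; exact hMpos z⟩⟩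
    set U : BS m → ℝ := fun z => (supp z).inf' (hsupp z) fun x => D x z with hUdef
    have hU_le : ∀ z x, 0 < PYs z x → U z ≤ D x z := by
      intro z x hx
      exact Finset.inf'_le _ (Finset.mem_filter.mpr ⟨Finset.mem_univ x, hx⟩)
    have hU_mem : ∀ z, ∃ x, 0 < PYs z x ∧ D x z = U z := by
      intro z
      obtain ⟨x, hxmem, hxd⟩ := Finset.exists_mem_eq_inf' (hsupp z) fun x => D x z
      exact ⟨x, (Finset.mem_filter.mp hxmem).2, hxd.symm⟩
    have hBC : ∀ z x, PYs z x < maxProb (PYs z) → D x z ≤ U z := by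
      intro z x hx
      show D x z ≤ (supp z).inf' (hsupp z) fun x => D x z
      apply Finset.le_inf'
      intro y hy
      exact exch z y x (Finset.mem_filter.mp hy).2 hx
    -- the multiplier
    set lam : ℝ := univ.sup' univ_nonempty (fun z => ∑ x, max (D x z - U z) 0)
      with hlamdef
    have hlam_ge : ∀ z, ∑ x, max (D x z - U z) 0 ≤ lam :=
      fun z => Finset.le_sup' (fun z => ∑ x, max (D x z - U z) 0) (mem_univ z)
    have hlam0 : 0 ≤ lam :=
      le_trans (KKTAux.f_nonneg (fun x => D x (Classical.arbitrary _)) _)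
        (hlam_ge (Classical.arbitrary _))
    -- cross inequality
    have cross : ∀ z2 y0, PYs z2 y0 < maxProb (PYs z2) →
        (∀ x, PYs z2 x < maxProb (PYs z2) → D x z2 ≤ D y0 z2) →
        lam ≤ ∑ x, max (D x z2 - D y0 z2) 0 := by
      intro z2 y0 hy0 hy0max
      obtain ⟨z1, -, hz1⟩ :=
        Finset.exists_mem_eq_sup' (univ_nonempty) (fun z => ∑ x, max (D x z - U z) 0)
      have hlam_eq : lam = ∑ x, max (D x z1 - U z1) 0 := hz1
      rw [hlam_eq]
      rcases eq_or_ne z1 z2 with rfl | h12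
      · exact KKTAux.f_anti (fun x => D x z1) (hBC z1 y0 hy0)
      by_contra hcon0
      push_neg at hcon0
      have hcon : ∑ x, max (D x z2 - D y0 z2) 0 < ∑ x, max (D x z1 - U z1) 0 := hcon0
      -- gain side data
      set A1 := univ.filter (fun x => U z1 < D x z1) with hA1
      have hfU1 : ∑ x, max (D x z1 - U z1) 0 = ∑ x ∈ A1, (D x z1 - U z1) :=
        KKTAux.f_eq_sum_filter (fun x => D x z1) (U z1) (fun x => U z1 < D x z1)
          (fun x hx => hx.le) (fun x hx => le_of_not_gt hx)
      have hA1ne : A1.Nonempty := by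
        by_contra hA1e
        rw [Finset.not_nonempty_iff_eq_empty] at hA1e
        rw [hfU1, hA1e, Finset.sum_empty] at hcon
        exact absurd hcon (not_lt.mpr (KKTAux.f_nonneg (fun x => D x z2) (D y0 z2)))
      set k1 : ℝ := (A1.card : ℝ) with hk1
      have hk1pos : 0 < k1 := by
        rw [hk1]
        exact_mod_cast Finset.card_pos.mpr hA1ne
      obtain ⟨x0, hx0pos, hx0d⟩ := hU_mem z1
      -- loss side data
      set A2 := univ.filter (fun x => PYs z2 x = maxProb (PYs z2)) with hA2
      set k2 : ℝ := (A2.card : ℝ) with hk2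
      have hk2nn : (0:ℝ) ≤ k2 := by rw [hk2]; positivity
      set nm2 := univ.filter (fun x => PYs z2 x < maxProb (PYs z2)) with hnm2
      have hnm2ne : nm2.Nonempty :=
        ⟨y0, Finset.mem_filter.mpr ⟨Finset.mem_univ y0, hy0⟩⟩
      -- choice of epsilon and delta
      set εA := nm2.inf' hnm2ne (fun u => (maxProb (PYs z2) - PYs z2 u) / (k2 + 1))
        with hεA
      have hεApos : 0 < εA := by
        rw [hεA, Finset.lt_inf'_iff]
        intro u hu
        exact div_pos (by linarith [(Finset.mem_filter.mp hu).2]) (by linarith)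
      set εB := PZ z1 * PYs z1 x0 / (PZ z2 * k1) with hεB
      have hεBpos : 0 < εB :=
        div_pos (mul_pos (hPZpos z1) hx0pos) (mul_pos (hPZpos z2) hk1pos)
      set ε := min εA εB with hεdef
      have hεpos : 0 < ε := lt_min hεApos hεBpos
      set δ := PZ z2 * ε / PZ z1 with hδdef
      have hδpos : 0 < δ := div_pos (mul_pos (hPZpos z2) hεpos) (hPZpos z1)
      have hbal : PZ z1 * δ = PZ z2 * ε := by
        rw [hδdef, ← mul_div_assoc]
        exact mul_div_cancel_left₀ _ (hPZpos z1).ne'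
      -- gain perturbation at z1
      have hδ2 : k1 * δ ≤ PYs z1 x0 := by
        have h1 : ε ≤ εB := min_le_right _ _
        rw [hεB] at h1
        have h2 : ε * (PZ z2 * k1) ≤ PZ z1 * PYs z1 x0 :=
          (le_div_iff₀ (mul_pos (hPZpos z2) hk1pos)).mp h1
        have h3 : k1 * δ * PZ z1 = ε * (PZ z2 * k1) := by
          rw [hδdef]
          field_simp [(hPZpos z1).ne']
        have h5 : PZ z1 * (k1 * δ) ≤ PZ z1 * PYs z1 x0 := by linarith
        exact le_of_mul_le_mul_left h5 (hPZpos z1)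
      obtain ⟨p1, hp1, hp1max, hp1val⟩ :=
        KKTAux.gain_perturb (hPYs z1) (fun x => D x z1) hx0pos hx0d hδpos hδ2
      -- loss perturbation at z2
      have hε2 : ∀ u, PYs z2 u < maxProb (PYs z2) →
          PYs z2 u + (k2 + 1) * ε ≤ maxProb (PYs z2) := by
        intro u hu
        have h1 : ε ≤ (maxProb (PYs z2) - PYs z2 u) / (k2 + 1) :=
          le_trans (min_le_left _ _)
            (Finset.inf'_le _ (Finset.mem_filter.mpr ⟨Finset.mem_univ u, hu⟩))
        rw [le_div_iff₀ (by linarith : (0:ℝ) < k2 + 1)] at h1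
        linarith
      obtain ⟨p2, hp2, hp2max, hp2val⟩ :=
        KKTAux.loss_perturb (hPYs z2) (fun x => D x z2) hy0 hy0max
          (fun x hx => exch z2 x y0 (by rw [hx]; exact hMpos z2) hy0) hεpos hε2
      -- combine
      have hmaxsum : PZ z1 * maxProb p1 + PZ z2 * maxProb p2 ≤
          PZ z1 * maxProb (PYs z1) + PZ z2 * maxProb (PYs z2) := by
        have g1 := mul_le_mul_of_nonneg_left hp1max (hPZpos z1).le
        have g2 := mul_le_mul_of_nonneg_left hp2max (hPZpos z2).le
        have e1 : PZ z1 * (maxProb (PYs z1) + δ)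
            = PZ z1 * maxProb (PYs z1) + PZ z1 * δ := by ring
        have e2 : PZ z2 * (maxProb (PYs z2) - ε)
            = PZ z2 * maxProb (PYs z2) - PZ z2 * ε := by ring
        rw [e1] at g1
        rw [e2] at g2
        linarith [hbal]
      have hcomp := KKTAux.double_update hPZpos hPYs Hopt z1 z2 h12 hp1 hp2 hmaxsum
      rw [hp1val, hp2val] at hcomp
      have key1 : PZ z1 * δ * (∑ x, max (D x z1 - U z1) 0)
          ≤ PZ z2 * ε * (∑ x, max (D x z2 - D y0 z2) 0) := by nlinarith [hcomp]
      have hPb : 0 < PZ z2 * ε := mul_pos (hPZpos z2) hεpos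
      have key2 : PZ z2 * ε * (∑ x, max (D x z2 - D y0 z2) 0)
          < PZ z2 * ε * (∑ x, max (D x z1 - U z1) 0) :=
        (mul_lt_mul_iff_right₀ hPb).mpr hcon
      have key3 : PZ z1 * δ * (∑ x, max (D x z1 - U z1) 0)
          = PZ z2 * ε * (∑ x, max (D x z1 - U z1) 0) := by rw [hbal]
      linarith
    -- construct the thresholds
    have ht : ∀ z, ∃ tz, (∑ x, max (D x z - tz) 0 = lam) ∧ tz ≤ U z ∧
        (∀ x, PYs z x < maxProb (PYs z) → D x z ≤ tz) := by
      intro z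
      by_cases hnm : ∃ y, PYs z y < maxProb (PYs z)
      · set nm := univ.filter (fun x => PYs z x < maxProb (PYs z)) with hnmdef
        have hnmne : nm.Nonempty := by
          obtain ⟨y, hy⟩ := hnm
          exact ⟨y, Finset.mem_filter.mpr ⟨Finset.mem_univ y, hy⟩⟩
        obtain ⟨y0, hy0mem, hy0d⟩ := Finset.exists_mem_eq_sup' hnmne (fun x => D x z)
        have hy0lt : PYs z y0 < maxProb (PYs z) := (Finset.mem_filter.mp hy0mem).2
        have hy0max : ∀ x, PYs z x < maxProb (PYs z) → D x z ≤ D y0 z := by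
          intro x hx
          have h1 := Finset.le_sup' (fun x => D x z)
            (Finset.mem_filter.mpr ⟨Finset.mem_univ x, hx⟩ : x ∈ nm)
          rw [hy0d] at h1
          exact h1
        have hLU : D y0 z ≤ U z := hBC z y0 hy0lt
        have hIVT := intermediate_value_Icc' hLU
          (KKTAux.f_cont (fun x => D x z)).continuousOn
        obtain ⟨tz, htmem, htz⟩ := hIVT ⟨hlam_ge z, cross z y0 hy0lt hy0max⟩
        exact ⟨tz, htz, htmem.2, fun x hx => le_trans (hy0max x hx) htmem.1⟩
      · push_neg at hnm
        have hfT : lam ≤ ∑ x, max (D x z - min (U z) (-lam)) 0 :=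
          KKTAux.f_large (fun x => D x z) (fun x => (hD x z).1) hlam0 (min_le_right _ _)
        have hIVT := intermediate_value_Icc' (min_le_left (U z) (-lam))
          (KKTAux.f_cont (fun x => D x z)).continuousOn
        obtain ⟨tz, htmem, htz⟩ := hIVT ⟨hlam_ge z, hfT⟩
        exact ⟨tz, htz, htmem.2, fun x hx => absurd hx (not_lt.mpr (hnm x))⟩
    choose t ht1 ht2 ht3 using ht
    refine ⟨t, lam, hlam0, fun z => ⟨ht1 z, ?_, ?_, ?_⟩⟩
    · intro x hx hxmax
      exact le_antisymm (ht3 z x hxmax) (le_trans (ht2 z) (hU_le z x hx))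
    · intro x hx0
      exact ht3 z x (by rw [hx0]; exact hMpos z)
    · intro x hxmax
      exact le_trans (ht2 z) (hU_le z x (by rw [hxmax]; exact hMpos z))
  · -- backward direction
    rintro ⟨t, lam, hlam0, hcond⟩ PY hPY hentPY
    have hS : (∑ z, PZ z * maxProb (PY z)) ≤ ∑ z, PZ z * maxProb (PYs z) := by
      refine (KKTAux.ent_le_ent_iff hPZpos hPY hPYs).mp ?_
      rw [hent]
      exact hentPY
    rw [KKTAux.condExp_eq, KKTAux.condExp_eq]
    have hub : ∀ z, ∑ x, PY z x * D x z ≤ t z + lam * maxProb (PY z) := fun z =>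
      KKTAux.inner_ub (hPY z) (fun x => D x z) (t z) lam (hcond z).1
    have heq : ∀ z, ∑ x, PYs z x * D x z = t z + lam * maxProb (PYs z) := fun z =>
      KKTAux.inner_eq (hPYs z) (fun x => D x z) (t z) lam (hcond z).1
        (hcond z).2.1 (hcond z).2.2.1 (hcond z).2.2.2
    calc ∑ z, PZ z * ∑ x, PY z x * D x z
        ≤ ∑ z, PZ z * (t z + lam * maxProb (PY z)) :=
          Finset.sum_le_sum fun z _ =>
            mul_le_mul_of_nonneg_left (hub z) (hPZpos z).le
      _ = ∑ z, PZ z * t z + lam * ∑ z, PZ z * maxProb (PY z) := by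
          rw [Finset.mul_sum, ← Finset.sum_add_distrib]
          exact Finset.sum_congr rfl fun z _ => by ring
      _ ≤ ∑ z, PZ z * t z + lam * ∑ z, PZ z * maxProb (PYs z) := by
          have := mul_le_mul_of_nonneg_left hS hlam0
          linarith
      _ = ∑ z, PZ z * (t z + lam * maxProb (PYs z)) := by
          rw [Finset.mul_sum, ← Finset.sum_add_distrib]
          exact Finset.sum_congr rfl fun z _ => by ring
      _ = ∑ z, PZ z * ∑ x, PYs z x * D x z :=
          Finset.sum_congr rfl fun z _ => by rw [heq z]
end

section
/- Let n, m be positive integers, let (X,Z) be a jointly distributed pair of random variables on {0,1}^n × {0,1}^m, let D : {0,1}^n × {0,1}^m → [0,1], let ε > 0 and k > 0, and suppose E D(X,Z) − E D(Y,Z) ≥ ε for every conditional distribution Y|Z with ˜H∞(Y|Z) ≥ k. Let Y*|Z with ˜H∞(Y*|Z) = k, real numbers t(z) and λ ≥ 0 satisfy conditions (a)–(d) of the maximizer characterization, and define D'(x,z) = max(D(x,z) − t(z), 0). Then E D'(X,Z) − E D'(Y,Z) ≥ ε for every conditional distribution Y|Z with ˜H∞(Y|Z) ≥ k. -/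
open Finset

lemma le_maxProb {α : Type*} [Fintype α] [Nonempty α] (p : α → ℝ) (a : α) :
    p a ≤ maxProb p :=
  le_ciSup (Set.Finite.bddAbove (Set.finite_range p)) a

lemma exists_pos_of_dist {α : Type*} [Fintype α] {p : α → ℝ}
    (h0 : ∀ a, 0 ≤ p a) (h1 : ∑ a, p a = 1) : ∃ a, 0 < p a := by
  by_contra h
  push_neg at h
  have : ∑ a, p a = 0 := Finset.sum_eq_zero fun a _ => le_antisymm (h a) (h0 a)
  rw [this] at h1; norm_num at h1

lemma maxProb_pos {α : Type*} [Fintype α] [Nonempty α] {p : α → ℝ}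
    (hp : IsDist p) : 0 < maxProb p := by
  obtain ⟨a, ha⟩ := exists_pos_of_dist hp.1 hp.2
  exact ha.trans_le (le_maxProb p a)

/-- The modified distinguisher `D'(x,z) = max(D(x,z) − t(z), 0)` keeps the same
distinguishing advantage against all conditional distributions of high average
min-entropy. -/
theorem stmt_2 (n m : ℕ) (hn : 0 < n) (hm : 0 < m)
    (PXZ : BS n → BS m → ℝ) (hPXZ : IsJointDist PXZ)
    (D : BS n → BS m → ℝ) (hD : ∀ x z, D x z ∈ Set.Icc (0:ℝ) 1)
    (ε k : ℝ) (hε : 0 < ε) (hk : 0 < k)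
    (hdist : ∀ PY : BS m → BS n → ℝ, IsCondDist PY →
      k ≤ avgMinEntropy (margZ PXZ) PY →
      jointExp PXZ D - condExp (margZ PXZ) PY D ≥ ε)
    (PYs : BS m → BS n → ℝ) (hPYs : IsCondDist PYs)
    (hent : avgMinEntropy (margZ PXZ) PYs = k)
    (t : BS m → ℝ) (lam : ℝ) (hlam : 0 ≤ lam)
    (hconda : ∀ z, ∑ x, max (D x z - t z) 0 = lam)
    (hcondb : ∀ z x, 0 < PYs z x → PYs z x < maxProb (PYs z) → D x z = t z)
    (hcondc : ∀ z x, PYs z x = 0 → D x z ≤ t z)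
    (hcondd : ∀ z x, PYs z x = maxProb (PYs z) → t z ≤ D x z) :
    ∀ PY : BS m → BS n → ℝ, IsCondDist PY →
      k ≤ avgMinEntropy (margZ PXZ) PY →
      jointExp PXZ (fun x z => max (D x z - t z) 0) -
        condExp (margZ PXZ) PY (fun x z => max (D x z - t z) 0) ≥ ε := by
  intro PY hPY hentY
  classical
  have hD'0 : ∀ x z, (0:ℝ) ≤ max (D x z - t z) 0 := fun x z => le_max_right _ _
  have hPZ0 : ∀ z, 0 ≤ margZ PXZ z := fun z => Finset.sum_nonneg fun x _ => hPXZ.1 x z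
  have hPZ1 : ∑ z, margZ PXZ z = 1 := by
    simp only [margZ]; rw [Finset.sum_comm]; exact hPXZ.2
  -- per-z identity for Y*
  have hstar : ∀ z, ∑ x, PYs z x * max (D x z - t z) 0 = maxProb (PYs z) * lam := by
    intro z
    have key : ∀ x, PYs z x * max (D x z - t z) 0 = maxProb (PYs z) * max (D x z - t z) 0 := by
      intro x
      rcases eq_or_lt_of_le ((hPYs z).1 x) with h0 | h0
      · have hz : max (D x z - t z) 0 = 0 :=
          max_eq_right (sub_nonpos.mpr (hcondc z x h0.symm))
        rw [hz]; ring
      · rcases eq_or_lt_of_le (le_maxProb (PYs z) x) with hmax | hmax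
        · rw [hmax]
        · have ht : D x z = t z := hcondb z x h0 hmax
          have hz : max (D x z - t z) 0 = 0 := by rw [ht]; simp
          rw [hz]; ring
    rw [Finset.sum_congr rfl (fun x _ => key x), ← Finset.mul_sum, hconda z]
  have hstar2 : ∀ z, ∑ x, PYs z x * max (D x z - t z) 0
      = (∑ x, PYs z x * D x z) - t z := by
    intro z
    have key : ∀ x, PYs z x * max (D x z - t z) 0 = PYs z x * (D x z - t z) := by
      intro x
      rcases eq_or_lt_of_le ((hPYs z).1 x) with h0 | h0
      · rw [← h0]; ring
      · rcases eq_or_lt_of_le (le_maxProb (PYs z) x) with hmax | hmax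
        · have ht : t z ≤ D x z := hcondd z x hmax
          rw [max_eq_left (sub_nonneg.mpr ht)]
        · have ht : D x z = t z := hcondb z x h0 hmax
          rw [ht]; simp
    rw [Finset.sum_congr rfl (fun x _ => key x)]
    have : ∑ x, PYs z x * (D x z - t z)
        = (∑ x, PYs z x * D x z) - (∑ x, PYs z x) * t z := by
      rw [Finset.sum_mul, ← Finset.sum_sub_distrib]; congr 1; ext x; ring
    rw [this, (hPYs z).2, one_mul]
  -- per-z bound for Y
  have hY : ∀ z, ∑ x, PY z x * max (D x z - t z) 0 ≤ maxProb (PY z) * lam := by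
    intro z
    calc ∑ x, PY z x * max (D x z - t z) 0
        ≤ ∑ x, maxProb (PY z) * max (D x z - t z) 0 :=
          Finset.sum_le_sum fun x _ =>
            mul_le_mul_of_nonneg_right (le_maxProb (PY z) x) (hD'0 x z)
      _ = maxProb (PY z) * lam := by rw [← Finset.mul_sum, hconda z]
  -- entropy comparison
  have hSYpos : 0 < ∑ z, margZ PXZ z * maxProb (PY z) := by
    obtain ⟨z0, hz0⟩ := exists_pos_of_dist hPZ0 hPZ1
    refine Finset.sum_pos' (fun z _ => mul_nonneg (hPZ0 z)
      (le_trans ((hPY z).1 (Classical.arbitrary _)) (le_maxProb _ _)))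
      ⟨z0, Finset.mem_univ z0, mul_pos hz0 (maxProb_pos (hPY z0))⟩
  have hSspos : 0 < ∑ z, margZ PXZ z * maxProb (PYs z) := by
    obtain ⟨z0, hz0⟩ := exists_pos_of_dist hPZ0 hPZ1
    refine Finset.sum_pos' (fun z _ => mul_nonneg (hPZ0 z)
      (le_trans ((hPYs z).1 (Classical.arbitrary _)) (le_maxProb _ _)))
      ⟨z0, Finset.mem_univ z0, mul_pos hz0 (maxProb_pos (hPYs z0))⟩
  have hSle : ∑ z, margZ PXZ z * maxProb (PY z)
      ≤ ∑ z, margZ PXZ z * maxProb (PYs z) := by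
    have h1 : Real.logb 2 (∑ z, margZ PXZ z * maxProb (PY z))
        ≤ Real.logb 2 (∑ z, margZ PXZ z * maxProb (PYs z)) := by
      simp only [avgMinEntropy] at hentY hent
      linarith
    exact (Real.logb_le_logb (by norm_num) hSYpos hSspos).mp h1
  -- conditional expectations
  have hCYs : condExp (margZ PXZ) PYs (fun x z => max (D x z - t z) 0)
      = condExp (margZ PXZ) PYs D - ∑ z, margZ PXZ z * t z := by
    simp only [condExp]
    rw [← Finset.sum_sub_distrib]
    refine Finset.sum_congr rfl fun z _ => ?_
    have e1 : ∑ x, margZ PXZ z * PYs z x * max (D x z - t z) 0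
        = margZ PXZ z * ∑ x, PYs z x * max (D x z - t z) 0 := by
      rw [Finset.mul_sum]; exact Finset.sum_congr rfl fun x _ => by ring
    have e2 : ∑ x, margZ PXZ z * PYs z x * D x z
        = margZ PXZ z * ∑ x, PYs z x * D x z := by
      rw [Finset.mul_sum]; exact Finset.sum_congr rfl fun x _ => by ring
    rw [e1, e2, hstar2 z]; ring
  have hCYsval : condExp (margZ PXZ) PYs (fun x z => max (D x z - t z) 0)
      = lam * ∑ z, margZ PXZ z * maxProb (PYs z) := by
    simp only [condExp]
    rw [Finset.mul_sum]
    refine Finset.sum_congr rfl fun z _ => ?_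
    have e1 : ∑ x, margZ PXZ z * PYs z x * max (D x z - t z) 0
        = margZ PXZ z * ∑ x, PYs z x * max (D x z - t z) 0 := by
      rw [Finset.mul_sum]; exact Finset.sum_congr rfl fun x _ => by ring
    rw [e1, hstar z]; ring
  have hCY : condExp (margZ PXZ) PY (fun x z => max (D x z - t z) 0)
      ≤ lam * ∑ z, margZ PXZ z * maxProb (PY z) := by
    simp only [condExp]
    rw [Finset.mul_sum]
    refine Finset.sum_le_sum fun z _ => ?_
    have e1 : ∑ x, margZ PXZ z * PY z x * max (D x z - t z) 0
        = margZ PXZ z * ∑ x, PY z x * max (D x z - t z) 0 := by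
      rw [Finset.mul_sum]; exact Finset.sum_congr rfl fun x _ => by ring
    rw [e1]
    calc margZ PXZ z * ∑ x, PY z x * max (D x z - t z) 0
        ≤ margZ PXZ z * (maxProb (PY z) * lam) :=
          mul_le_mul_of_nonneg_left (hY z) (hPZ0 z)
      _ = lam * (margZ PXZ z * maxProb (PY z)) := by ring
  -- joint expectation
  have hJ : jointExp PXZ D - ∑ z, margZ PXZ z * t z
      ≤ jointExp PXZ (fun x z => max (D x z - t z) 0) := by
    have hT : ∑ z, margZ PXZ z * t z = ∑ x, ∑ z, PXZ x z * t z := by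
      rw [Finset.sum_comm]
      refine Finset.sum_congr rfl fun z _ => ?_
      simp only [margZ]; rw [Finset.sum_mul]
    simp only [jointExp]
    rw [hT, ← Finset.sum_sub_distrib]
    refine Finset.sum_le_sum fun x _ => ?_
    rw [← Finset.sum_sub_distrib]
    refine Finset.sum_le_sum fun z _ => ?_
    have : PXZ x z * D x z - PXZ x z * t z = PXZ x z * (D x z - t z) := by ring
    rw [this]
    exact mul_le_mul_of_nonneg_left (le_max_left _ _) (hPXZ.1 x z)
  have hbase : jointExp PXZ D - condExp (margZ PXZ) PYs D ≥ ε :=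
    hdist PYs hPYs (le_of_eq hent.symm)
  have hlamle : lam * ∑ z, margZ PXZ z * maxProb (PY z)
      ≤ lam * ∑ z, margZ PXZ z * maxProb (PYs z) :=
    mul_le_mul_of_nonneg_left hSle hlam
  linarith
end

section
/- Let n, m be positive integers, let (X,Z) be a jointly distributed pair on {0,1}^n × {0,1}^m, let D : {0,1}^n × {0,1}^m → [0,1], let ε > 0 and 0 < k < n, and suppose E D(X,Z) − E D(Y,Z) ≥ ε for every conditional distribution Y|Z with ˜H∞(Y|Z) ≥ k. Let Y*|Z with ˜H∞(Y*|Z) = k, real numbers t(z) and λ ≥ 0 satisfy conditions (a)–(d) of the maximizer characterization, and define D'(x,z) = max(D(x,z) − t(z), 0). Then there exists a real number λ' ∈ (0,1) such that 2^{−n}·∑_{x∈{0,1}^n} D'(x,z) = λ' for every z ∈ {0,1}^m. -/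
open Finset

/-- The modified distinguisher `D'(x,z) = max(D(x,z) − t(z), 0)` has the same
expectation `λ' ∈ (0,1)` under the uniform distribution, for every `z`. -/
theorem stmt_3 (n m : ℕ) (hn : 0 < n) (hm : 0 < m)
    (PXZ : BS n → BS m → ℝ) (hPXZ : IsJointDist PXZ)
    (D : BS n → BS m → ℝ) (hD : ∀ x z, D x z ∈ Set.Icc (0:ℝ) 1)
    (ε k : ℝ) (hε : 0 < ε) (hk0 : 0 < k) (hkn : k < n)
    (hdist : ∀ PY : BS m → BS n → ℝ, IsCondDist PY →
      k ≤ avgMinEntropy (margZ PXZ) PY →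
      jointExp PXZ D - condExp (margZ PXZ) PY D ≥ ε)
    (PYs : BS m → BS n → ℝ) (hPYs : IsCondDist PYs)
    (hent : avgMinEntropy (margZ PXZ) PYs = k)
    (t : BS m → ℝ) (lam : ℝ) (hlam : 0 ≤ lam)
    (hconda : ∀ z, ∑ x, max (D x z - t z) 0 = lam)
    (hcondb : ∀ z x, 0 < PYs z x → PYs z x < maxProb (PYs z) → D x z = t z)
    (hcondc : ∀ z x, PYs z x = 0 → D x z ≤ t z)
    (hcondd : ∀ z x, PYs z x = maxProb (PYs z) → t z ≤ D x z) :
    ∃ lam' ∈ Set.Ioo (0:ℝ) 1, ∀ z : BS m,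
      (1 / 2 ^ n : ℝ) * ∑ x, max (D x z - t z) 0 = lam' := by

  classical
  have hPZ0 : ∀ z, 0 ≤ margZ PXZ z := fun z => Finset.sum_nonneg fun x _ => hPXZ.1 x z
  have hPZ1 : ∑ z, margZ PXZ z = 1 := by
    rw [← hPXZ.2, Finset.sum_comm]; rfl
  have hle : ∀ z x, PYs z x ≤ maxProb (PYs z) := fun z x =>
    le_ciSup (Set.Finite.bddAbove (Set.finite_range _)) x
  have hDge : ∀ z x, 0 < PYs z x → t z ≤ D x z := by
    intro z x hp
    rcases lt_or_eq_of_le (hle z x) with h | h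
    · exact (hcondb z x hp h).symm.le
    · exact hcondd z x h
  have hcardBS : (Fintype.card (BS n) : ℝ) = 2 ^ n := by
    simp [Fintype.card_fun]
  have hpow : (0:ℝ) < 2 ^ n := by positivity
  -- lam > 0
  have hlampos : 0 < lam := by
    rcases hlam.lt_or_eq with h | h
    · exact h
    · exfalso
      have hDle : ∀ z x, D x z ≤ t z := by
        intro z x
        have h0 : max (D x z - t z) 0 = 0 :=
          (Finset.sum_eq_zero_iff_of_nonneg (fun x _ => le_max_right _ 0)).mp
            ((hconda z).trans h.symm) x (Finset.mem_univ x)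
        have := le_max_left (D x z - t z) 0
        linarith
      have hJ : jointExp PXZ D ≤ ∑ z, margZ PXZ z * t z := by
        unfold jointExp
        rw [Finset.sum_comm]
        apply Finset.sum_le_sum
        intro z _
        have : margZ PXZ z * t z = ∑ x, PXZ x z * t z := by
          rw [← Finset.sum_mul]; rfl
        rw [this]
        exact Finset.sum_le_sum fun x _ =>
          mul_le_mul_of_nonneg_left (hDle z x) (hPXZ.1 x z)
      have hC : ∑ z, margZ PXZ z * t z ≤ condExp (margZ PXZ) PYs D := by
        unfold condExp
        apply Finset.sum_le_sum
        intro z _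
        have hTle : t z ≤ ∑ x, PYs z x * D x z := by
          calc t z = ∑ x, PYs z x * t z := by
                rw [← Finset.sum_mul, (hPYs z).2, one_mul]
            _ ≤ ∑ x, PYs z x * D x z := by
                apply Finset.sum_le_sum
                intro x _
                rcases eq_or_lt_of_le ((hPYs z).1 x) with hp | hp
                · rw [← hp]; simp
                · exact mul_le_mul_of_nonneg_left (hDge z x hp) hp.le
        calc margZ PXZ z * t z ≤ margZ PXZ z * ∑ x, PYs z x * D x z :=
              mul_le_mul_of_nonneg_left hTle (hPZ0 z)
          _ = ∑ x, margZ PXZ z * PYs z x * D x z := by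
              rw [Finset.mul_sum]; simp [mul_assoc]
      have hge := hdist PYs hPYs (le_of_eq hent.symm)
      linarith
  -- entropy: sum of PZ * maxProb equals 2^(-k) > 2^(-n)
  have hSpos : (0:ℝ) < ∑ z, margZ PXZ z * maxProb (PYs z) := by
    obtain ⟨z1, _, hz1⟩ : ∃ z ∈ Finset.univ, 0 < margZ PXZ z := by
      by_contra hcon
      push_neg at hcon
      have : ∑ z, margZ PXZ z ≤ 0 :=
        Finset.sum_nonpos fun z hz => hcon z hz
      rw [hPZ1] at this; linarith
    have hmp : 0 < maxProb (PYs z1) := by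
      obtain ⟨x1, _, hx1⟩ : ∃ x ∈ Finset.univ, 0 < PYs z1 x := by
        by_contra hcon
        push_neg at hcon
        have : ∑ x, PYs z1 x ≤ 0 := Finset.sum_nonpos fun x hx => hcon x hx
        rw [(hPYs z1).2] at this; linarith
      exact lt_of_lt_of_le hx1 (hle z1 x1)
    apply Finset.sum_pos' (fun z _ => mul_nonneg (hPZ0 z)
      (le_trans ((hPYs z).1 (Classical.arbitrary _)) (hle z _)))
    exact ⟨z1, Finset.mem_univ z1, mul_pos hz1 hmp⟩
  have hSgt : ((2:ℝ) ^ n)⁻¹ < ∑ z, margZ PXZ z * maxProb (PYs z) := by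
    have hlogb : Real.logb 2 (∑ z, margZ PXZ z * maxProb (PYs z)) = -k := by
      have := hent
      unfold avgMinEntropy at this
      linarith
    have hSeq : (∑ z, margZ PXZ z * maxProb (PYs z)) = (2:ℝ) ^ (-k) := by
      rw [← hlogb, Real.rpow_logb (by norm_num) (by norm_num) hSpos]
    have h2 : (2:ℝ) ^ (-(n:ℝ)) < (2:ℝ) ^ (-k) := by
      apply Real.rpow_lt_rpow_left_iff (by norm_num : (1:ℝ) < 2) |>.mpr
      linarith
    have h3 : (2:ℝ) ^ (-(n:ℝ)) = ((2:ℝ) ^ n)⁻¹ := by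
      rw [Real.rpow_neg (by norm_num), Real.rpow_natCast]
    rw [hSeq]
    rw [← h3]
    exact h2
  -- find z0 with maxProb > 2^{-n}
  obtain ⟨z0, hz0⟩ : ∃ z, ((2:ℝ) ^ n)⁻¹ < maxProb (PYs z) := by
    by_contra hcon
    push_neg at hcon
    have : (∑ z, margZ PXZ z * maxProb (PYs z)) ≤ ((2:ℝ) ^ n)⁻¹ := by
      calc (∑ z, margZ PXZ z * maxProb (PYs z))
          ≤ ∑ z, margZ PXZ z * ((2:ℝ) ^ n)⁻¹ :=
            Finset.sum_le_sum fun z _ => mul_le_mul_of_nonneg_left (hcon z) (hPZ0 z)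
        _ = ((2:ℝ) ^ n)⁻¹ := by rw [← Finset.sum_mul, hPZ1, one_mul]
    linarith
  -- find x0 with PYs z0 x0 < maxProb
  obtain ⟨x0, hx0⟩ : ∃ x, PYs z0 x < maxProb (PYs z0) := by
    by_contra hcon
    push_neg at hcon
    have h1 : (1:ℝ) < ∑ x, PYs z0 x := by
      have hterm : ∀ x ∈ Finset.univ, ((2:ℝ) ^ n)⁻¹ < PYs z0 x :=
        fun x _ => lt_of_lt_of_le hz0 (hcon x)
      calc (1:ℝ) = ∑ _x : BS n, ((2:ℝ) ^ n)⁻¹ := by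
            rw [Finset.sum_const, nsmul_eq_mul, Finset.card_univ, hcardBS]
            field_simp
        _ < ∑ x, PYs z0 x := Finset.sum_lt_sum_of_nonempty Finset.univ_nonempty hterm
    rw [(hPYs z0).2] at h1; linarith
  have hDx0 : D x0 z0 ≤ t z0 := by
    rcases eq_or_lt_of_le ((hPYs z0).1 x0) with hp | hp
    · exact hcondc z0 x0 hp.symm
    · exact (hcondb z0 x0 hp hx0).le
  have ht0 : 0 ≤ t z0 := le_trans (hD x0 z0).1 hDx0
  -- lam < 2^n
  have hlamlt : lam < 2 ^ n := by
    have hsum : lam = ∑ x, max (D x z0 - t z0) 0 := (hconda z0).symm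
    have hf0 : max (D x0 z0 - t z0) 0 = 0 := max_eq_right (by linarith)
    have hcardlt : ((Finset.univ.erase x0).card : ℝ) < 2 ^ n := by
      have := Finset.card_erase_lt_of_mem (Finset.mem_univ x0)
      rw [Finset.card_univ] at this
      calc ((Finset.univ.erase x0).card : ℝ) < (Fintype.card (BS n) : ℝ) := by
            exact_mod_cast this
        _ = 2 ^ n := hcardBS
    calc lam = max (D x0 z0 - t z0) 0 + ∑ x ∈ Finset.univ.erase x0, max (D x z0 - t z0) 0 := by
          rw [hsum]
          exact (Finset.add_sum_erase _ (fun x => max (D x z0 - t z0) 0)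
            (Finset.mem_univ x0)).symm
      _ ≤ 0 + ((Finset.univ.erase x0).card : ℝ) * 1 := by
          apply add_le_add (le_of_eq hf0)
          have := Finset.sum_le_card_nsmul (Finset.univ.erase x0)
            (fun x => max (D x z0 - t z0) 0) 1
            (fun x _ => max_le (by have := (hD x z0).2; linarith) one_pos.le)
          simpa [nsmul_eq_mul] using this
      _ < 2 ^ n := by rw [zero_add, mul_one]; exact hcardlt
  refine ⟨lam / 2 ^ n, ⟨div_pos hlampos hpow, (div_lt_one hpow).mpr hlamlt⟩, ?_⟩
  intro z
  rw [hconda z]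
  ring
end

section
/- Let n, m be positive integers, D : {0,1}^n × {0,1}^m → [0,1], let Y*|Z be a conditional distribution over {0,1}^n given a random variable Z on {0,1}^m, and let t(z) be real numbers such that conditions (b), (c), (d) of the maximizer characterization hold. Define D'(x,z) = max(D(x,z) − t(z), 0). Then for every z: ∑_x D'(x,z)·P_{Y*|Z=z}(x) = (2^{−n}·∑_x D'(x,z))·2^n·max_{x'} P_{Y*|Z=z}(x'); equivalently, the expectation of D'(·,z) under P_{Y*|Z=z} equals the expectation of D'(·,z) under the uniform distribution on {0,1}^n multiplied by 2^n·max_{x'} P_{Y*|Z=z}(x'). -/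
open Finset

/-- The expectation of `D'(·,z)` under `P_{Y*|Z=z}` equals its expectation under
the uniform distribution on `{0,1}^n` multiplied by `2^n · max_{x'} P_{Y*|Z=z}(x')`. -/
theorem stmt_4 (n m : ℕ) (hn : 0 < n) (hm : 0 < m)
    (D : BS n → BS m → ℝ) (hD : ∀ x z, D x z ∈ Set.Icc (0:ℝ) 1)
    (PYs : BS m → BS n → ℝ) (hPYs : IsCondDist PYs)
    (t : BS m → ℝ)
    (hcondb : ∀ z x, 0 < PYs z x → PYs z x < maxProb (PYs z) → D x z = t z)
    (hcondc : ∀ z x, PYs z x = 0 → D x z ≤ t z)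
    (hcondd : ∀ z x, PYs z x = maxProb (PYs z) → t z ≤ D x z) :
    ∀ z : BS m,
      ∑ x, max (D x z - t z) 0 * PYs z x =
        ((1 / 2 ^ n : ℝ) * ∑ x, max (D x z - t z) 0) *
          (2 ^ n * maxProb (PYs z)) := by
  intro z
  have hle : ∀ x, PYs z x ≤ maxProb (PYs z) := fun x =>
    le_ciSup (Set.Finite.bddAbove (Set.finite_range _)) x
  have key : ∀ x ∈ Finset.univ, max (D x z - t z) 0 * PYs z x =
      max (D x z - t z) 0 * maxProb (PYs z) := by
    intro x _
    rcases eq_or_lt_of_le (hle x) with h | h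
    · rw [h]
    rcases eq_or_lt_of_le ((hPYs z).1 x) with h0 | h0
    · have := hcondc z x h0.symm
      rw [max_eq_right (sub_nonpos.mpr this)]
      ring
    · rw [hcondb z x h0 h]
      simp
  rw [Finset.sum_congr rfl key, ← Finset.sum_mul]
  have h2 : (2:ℝ) ^ n ≠ 0 := by positivity
  field_simp
end

section
/- Let n, m be positive integers, let (X,Z) be a jointly distributed pair on {0,1}^n × {0,1}^m, let ε > 0 and 0 < k < n, and let D : {0,1}^n × {0,1}^m → [0,1] satisfy E D(X,Z) − E D(Y,Z) ≥ ε for every conditional distribution Y|Z with ˜H∞(Y|Z) ≥ k. Suppose there exist a conditional distribution Y*|Z with ˜H∞(Y*|Z) = k that attains the maximum of E D(Y,Z) over ˜H∞(Y|Z) ≥ k, together with real numbers t(z) and λ ≥ 0 satisfying conditions (a)–(d) of the maximizer characterization. Then there exists a function Q : {0,1}^n × {0,1}^m → [0,1] with ∑_x Q(x,z) ≤ 1 for every z (a sub-probability predictor kernel) such that ∑_{x,z} P_{X,Z}(x,z)·Q(x,z) ≥ 2^{−k}·(1 + 2^{k−n}·ε). -/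
open Finset

/-- From an `ε`-distinguisher against all conditional distributions of average
min-entropy at least `k`, one obtains a (sub-probability) predictor kernel that
guesses `X` given `Z` with probability at least `2^{−k}·(1 + 2^{k−n}·ε)`. -/
theorem stmt_5 (n m : ℕ) (hn : 0 < n) (hm : 0 < m)
    (PXZ : BS n → BS m → ℝ) (hPXZ : IsJointDist PXZ)
    (D : BS n → BS m → ℝ) (hD : ∀ x z, D x z ∈ Set.Icc (0:ℝ) 1)
    (ε k : ℝ) (hε : 0 < ε) (hk0 : 0 < k) (hkn : k < n)
    (hdist : ∀ PY : BS m → BS n → ℝ, IsCondDist PY →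
      k ≤ avgMinEntropy (margZ PXZ) PY →
      jointExp PXZ D - condExp (margZ PXZ) PY D ≥ ε)
    (PYs : BS m → BS n → ℝ) (hPYs : IsCondDist PYs)
    (hent : avgMinEntropy (margZ PXZ) PYs = k)
    (hmax : ∀ PY : BS m → BS n → ℝ, IsCondDist PY →
      k ≤ avgMinEntropy (margZ PXZ) PY →
      condExp (margZ PXZ) PY D ≤ condExp (margZ PXZ) PYs D)
    (t : BS m → ℝ) (lam : ℝ) (hlam : 0 ≤ lam)
    (hconda : ∀ z, ∑ x, max (D x z - t z) 0 = lam)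
    (hcondb : ∀ z x, 0 < PYs z x → PYs z x < maxProb (PYs z) → D x z = t z)
    (hcondc : ∀ z x, PYs z x = 0 → D x z ≤ t z)
    (hcondd : ∀ z x, PYs z x = maxProb (PYs z) → t z ≤ D x z) :
    ∃ Q : BS n → BS m → ℝ,
      (∀ x z, Q x z ∈ Set.Icc (0:ℝ) 1) ∧
      (∀ z, ∑ x, Q x z ≤ 1) ∧
      ∑ x, ∑ z, PXZ x z * Q x z ≥
        (2:ℝ) ^ (-k) * (1 + (2:ℝ) ^ (k - (n:ℝ)) * ε) := by
  classical
  set PZ := margZ PXZ with hPZdef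
  have hPZ0 : ∀ z, 0 ≤ PZ z := fun z => Finset.sum_nonneg fun x _ => hPXZ.1 x z
  have hPZ1 : ∑ z, PZ z = 1 := by
    rw [← hPXZ.2, Finset.sum_comm]; rfl
  have hcard : (Fintype.card (BS n) : ℝ) = 2 ^ n := by
    simp [BS, Fintype.card_fun]
  have hle : ∀ z x, PYs z x ≤ maxProb (PYs z) := fun z x =>
    le_ciSup (Set.Finite.bddAbove (Set.finite_range _)) x
  -- The sum S = ∑_z P_Z(z) · max_x P*(x|z)
  set S := ∑ z, PZ z * maxProb (PYs z) with hSdef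
  have hMlb : ∀ z, ((2:ℝ) ^ n)⁻¹ ≤ maxProb (PYs z) := by
    intro z
    have h2 : (1:ℝ) ≤ ∑ _x : BS n, maxProb (PYs z) := by
      rw [← (hPYs z).2]; exact Finset.sum_le_sum fun x _ => hle z x
    rw [Finset.sum_const, Finset.card_univ, nsmul_eq_mul, hcard] at h2
    rw [inv_le_iff_one_le_mul₀ (by positivity)]
    linarith
  have hSlb : ((2:ℝ) ^ n)⁻¹ ≤ S := by
    calc ((2:ℝ) ^ n)⁻¹ = ∑ z, PZ z * ((2:ℝ) ^ n)⁻¹ := by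
          rw [← Finset.sum_mul, hPZ1, one_mul]
      _ ≤ S := Finset.sum_le_sum fun z _ =>
          mul_le_mul_of_nonneg_left (hMlb z) (hPZ0 z)
  have hSpos : 0 < S := lt_of_lt_of_le (by positivity) hSlb
  have hS : S = (2:ℝ) ^ (-k) := by
    have h1 : Real.logb 2 S = -k := by
      have h := hent
      unfold avgMinEntropy at h
      linarith [h]
    rw [← Real.rpow_logb (by norm_num : (0:ℝ) < 2) (by norm_num : (2:ℝ) ≠ 1) hSpos, h1]
  -- Key per-z identity: ∑_x P*(x|z)(D(x,z) − t(z)) = maxProb · λ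
  have key : ∀ z, ∑ x, PYs z x * (D x z - t z) = maxProb (PYs z) * lam := by
    intro z
    have hterm : ∀ x, PYs z x * (D x z - t z) =
        maxProb (PYs z) * max (D x z - t z) 0 := by
      intro x
      rcases eq_or_lt_of_le ((hPYs z).1 x) with h0 | hpos
      · have hDt := hcondc z x h0.symm
        rw [← h0, max_eq_right (sub_nonpos.mpr hDt)]
        ring
      · rcases eq_or_lt_of_le (hle z x) with hmaxeq | hlt
        · have hDt := hcondd z x hmaxeq
          rw [hmaxeq, max_eq_left (sub_nonneg.mpr hDt)]
        · have hDt := hcondb z x hpos hlt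
          simp [hDt]
    rw [Finset.sum_congr rfl fun x _ => hterm x, ← Finset.mul_sum, hconda z]
  -- E D(Y*,Z) = λ·S + E t(Z)
  have hrow : ∀ z, ∑ x, PYs z x * D x z = maxProb (PYs z) * lam + t z := by
    intro z
    have h1 : ∑ x, PYs z x * D x z =
        (∑ x, PYs z x * (D x z - t z)) + (∑ x, PYs z x) * t z := by
      rw [Finset.sum_mul, ← Finset.sum_add_distrib]
      exact Finset.sum_congr rfl fun x _ => by ring
    rw [h1, key z, (hPYs z).2, one_mul]
  have hstar : condExp PZ PYs D = lam * S + ∑ z, PZ z * t z := by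
    unfold condExp
    have h1 : ∀ z, ∑ x, PZ z * PYs z x * D x z
        = lam * (PZ z * maxProb (PYs z)) + PZ z * t z := by
      intro z
      have : ∑ x, PZ z * PYs z x * D x z = PZ z * ∑ x, PYs z x * D x z := by
        rw [Finset.mul_sum]; exact Finset.sum_congr rfl fun x _ => by ring
      rw [this, hrow z]; ring
    rw [Finset.sum_congr rfl fun z _ => h1 z, Finset.sum_add_distrib,
      ← Finset.mul_sum, ← hSdef]
  -- E t(Z) as a joint sum
  have hT : (∑ x, ∑ z, PXZ x z * t z) = ∑ z, PZ z * t z := by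
    rw [Finset.sum_comm]
    exact Finset.sum_congr rfl fun z _ => by
      rw [hPZdef]; unfold margZ; rw [Finset.sum_mul]
  -- the distinguishing advantage against Y*
  have hadv : jointExp PXZ D - condExp PZ PYs D ≥ ε :=
    hdist PYs hPYs (le_of_eq hent.symm)
  have hJ : jointExp PXZ D ≥ lam * S + (∑ z, PZ z * t z) + ε := by
    rw [← hstar]; linarith
  -- λ > 0
  have hlam_pos : 0 < lam := by
    rcases hlam.lt_or_eq with h | h
    · exact h
    · exfalso
      have hDt : ∀ x z, D x z ≤ t z := by
        intro x z
        have h0 := hconda z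
        rw [← h] at h0
        have := (Finset.sum_eq_zero_iff_of_nonneg
          (fun x _ => le_max_right (D x z - t z) 0)).mp h0 x (Finset.mem_univ x)
        have h2 : D x z - t z ≤ 0 := by
          by_contra hc
          push_neg at hc
          rw [max_eq_left hc.le] at this
          linarith
        linarith
      have hJle : jointExp PXZ D ≤ ∑ z, PZ z * t z := by
        rw [← hT]
        unfold jointExp
        exact Finset.sum_le_sum fun x _ => Finset.sum_le_sum fun z _ =>
          mul_le_mul_of_nonneg_left (hDt x z) (hPXZ.1 x z)
      rw [← h] at hJ
      simp at hJ
      linarith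
  -- some z₀ has t(z₀) ≥ 0, hence λ ≤ 2^n
  have hz0 : ∃ z0 : BS m, 0 ≤ t z0 := by
    by_contra h
    push_neg at h
    have huni : ∀ z x, PYs z x = maxProb (PYs z) := by
      intro z x
      rcases eq_or_lt_of_le ((hPYs z).1 x) with h0 | hpos
      · exact absurd (hcondc z x h0.symm)
          (not_le.mpr (lt_of_lt_of_le (h z) (hD x z).1))
      · rcases eq_or_lt_of_le (hle z x) with he | hlt
        · exact he
        · exact absurd (hcondb z x hpos hlt)
            (by have := (hD x z).1; have := h z; intro hc; linarith)
    have hMz : ∀ z, maxProb (PYs z) = ((2:ℝ) ^ n)⁻¹ := by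
      intro z
      have h1 : (1:ℝ) = ∑ x, PYs z x := ((hPYs z).2).symm
      rw [Finset.sum_congr rfl fun x _ => huni z x, Finset.sum_const,
        Finset.card_univ, nsmul_eq_mul, hcard] at h1
      field_simp
      linarith
    have hSn : S = (2:ℝ) ^ (-(n:ℝ)) := by
      rw [hSdef, Finset.sum_congr rfl fun z _ => by rw [hMz z],
        ← Finset.sum_mul, hPZ1, one_mul, ← Real.rpow_natCast 2 n,
        ← Real.rpow_neg (by norm_num)]
    have hlt : (2:ℝ) ^ (-(n:ℝ)) < (2:ℝ) ^ (-k) := by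
      apply Real.rpow_lt_rpow_left_iff (x := 2) one_lt_two |>.mpr
      linarith
    rw [hS] at hSn
    linarith
  have hlam_le : lam ≤ (2:ℝ) ^ n := by
    obtain ⟨z0, ht0⟩ := hz0
    rw [← hconda z0]
    calc ∑ x, max (D x z0 - t z0) 0 ≤ ∑ _x : BS n, (1:ℝ) := by
          apply Finset.sum_le_sum
          intro x _
          have h1 := (hD x z0).2
          have h2 := (hD x z0).1
          rw [max_le_iff]
          constructor <;> linarith
      _ = (2:ℝ) ^ n := by
          rw [Finset.sum_const, Finset.card_univ, nsmul_eq_mul, hcard, mul_one]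
  -- the predictor
  refine ⟨fun x z => max (D x z - t z) 0 / lam, ?_, ?_, ?_⟩
  · intro x z
    constructor
    · exact div_nonneg (le_max_right _ _) hlam
    · rw [div_le_one hlam_pos]
      calc max (D x z - t z) 0 ≤ ∑ x', max (D x' z - t z) 0 :=
            Finset.single_le_sum (f := fun x' => max (D x' z - t z) 0)
              (fun x' _ => le_max_right _ _) (Finset.mem_univ x)
        _ = lam := hconda z
  · intro z
    rw [← Finset.sum_div, hconda z, div_self hlam_pos.ne']
  · -- the guessing probability bound
    have hnum : (∑ x, ∑ z, PXZ x z * max (D x z - t z) 0) ≥ lam * (2:ℝ) ^ (-k) + ε := by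
      have h1 : (∑ x, ∑ z, PXZ x z * (D x z - t z)) ≤
          ∑ x, ∑ z, PXZ x z * max (D x z - t z) 0 :=
        Finset.sum_le_sum fun x _ => Finset.sum_le_sum fun z _ =>
          mul_le_mul_of_nonneg_left (le_max_left _ _) (hPXZ.1 x z)
      have h2 : (∑ x, ∑ z, PXZ x z * (D x z - t z)) =
          jointExp PXZ D - ∑ z, PZ z * t z := by
        rw [← hT]
        unfold jointExp
        rw [← Finset.sum_sub_distrib]
        exact Finset.sum_congr rfl fun x _ => by
          rw [← Finset.sum_sub_distrib]
          exact Finset.sum_congr rfl fun z _ => by ring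
      rw [← hS]
      rw [h2] at h1
      linarith
    have heq : (∑ x, ∑ z, PXZ x z * (max (D x z - t z) 0 / lam)) =
        (∑ x, ∑ z, PXZ x z * max (D x z - t z) 0) / lam := by
      rw [Finset.sum_div]
      exact Finset.sum_congr rfl fun x _ => by
        rw [Finset.sum_div]
        exact Finset.sum_congr rfl fun z _ => by ring
    rw [ge_iff_le, heq, le_div_iff₀ hlam_pos]
    have hexp : (2:ℝ) ^ (-k) * ((2:ℝ) ^ (k - (n:ℝ))) = ((2:ℝ) ^ n)⁻¹ := by
      rw [← Real.rpow_add (by norm_num)]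
      rw [← Real.rpow_natCast 2 n, ← Real.rpow_neg (by norm_num)]
      ring_nf
    have hεn : ((2:ℝ) ^ n)⁻¹ * ε * lam ≤ ε := by
      have h1 : ((2:ℝ) ^ n)⁻¹ * lam ≤ 1 := by
        rw [inv_mul_le_iff₀ (by positivity), mul_one]
        exact hlam_le
      calc ((2:ℝ) ^ n)⁻¹ * ε * lam = (((2:ℝ) ^ n)⁻¹ * lam) * ε := by ring
        _ ≤ 1 * ε := mul_le_mul_of_nonneg_right h1 hε.le
        _ = ε := one_mul ε
    calc (2:ℝ) ^ (-k) * (1 + (2:ℝ) ^ (k - (n:ℝ)) * ε) * lam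
        = lam * (2:ℝ) ^ (-k) + ((2:ℝ) ^ (-k) * (2:ℝ) ^ (k - (n:ℝ))) * ε * lam := by
          ring
      _ = lam * (2:ℝ) ^ (-k) + ((2:ℝ) ^ n)⁻¹ * ε * lam := by rw [hexp]
      _ ≤ lam * (2:ℝ) ^ (-k) + ε := by linarith
      _ ≤ ∑ x, ∑ z, PXZ x z * max (D x z - t z) 0 := hnum
end

section
/- Let n, m be positive integers, let Y*|Z be a conditional distribution over {0,1}^n given a random variable Z on {0,1}^m with ˜H∞(Y*|Z) = k, let D : {0,1}^n × {0,1}^m → [0,1], let t(z) be real numbers such that conditions (b), (c), (d) of the maximizer characterization hold, set D'(x,z) = max(D(x,z) − t(z), 0), and suppose there is λ' ∈ ℝ with 2^{−n}·∑_x D'(x,z) = λ' for every z. Then ∑_z P_Z(z)·∑_x D'(x,z)·P_{Y*|Z=z}(x) = 2^{n−k}·λ'. -/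
open Finset

/-- The expectation of the modified distinguisher `D'` under the maximizing
distribution `Y*|Z` equals `2^{n−k}·λ'`. -/
theorem stmt_6 (n m : ℕ) (hn : 0 < n) (hm : 0 < m)
    (PZ : BS m → ℝ) (hPZ : IsDist PZ)
    (PYs : BS m → BS n → ℝ) (hPYs : IsCondDist PYs)
    (k : ℝ) (hent : avgMinEntropy PZ PYs = k)
    (D : BS n → BS m → ℝ) (hD : ∀ x z, D x z ∈ Set.Icc (0:ℝ) 1)
    (t : BS m → ℝ)
    (hcondb : ∀ z x, 0 < PYs z x → PYs z x < maxProb (PYs z) → D x z = t z)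
    (hcondc : ∀ z x, PYs z x = 0 → D x z ≤ t z)
    (hcondd : ∀ z x, PYs z x = maxProb (PYs z) → t z ≤ D x z)
    (lam' : ℝ)
    (hlam' : ∀ z : BS m, (1 / 2 ^ n : ℝ) * ∑ x, max (D x z - t z) 0 = lam') :
    ∑ z, PZ z * ∑ x, max (D x z - t z) 0 * PYs z x =
      (2:ℝ) ^ ((n:ℝ) - k) * lam' := by
  classical
  -- pointwise: D'(x,z) * PYs z x = maxProb (PYs z) * D'(x,z)
  have hpt : ∀ z x, max (D x z - t z) 0 * PYs z x = maxProb (PYs z) * max (D x z - t z) 0 := by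
    intro z x
    have hle : PYs z x ≤ maxProb (PYs z) := le_ciSup (Set.Finite.bddAbove (Set.finite_range _)) x
    rcases eq_or_lt_of_le hle with heq | hlt
    · rw [heq]; ring
    · rcases eq_or_lt_of_le ((hPYs z).1 x) with h0 | h0
      · have := hcondc z x h0.symm
        rw [max_eq_right (by linarith), ← h0]; ring
      · have := hcondb z x h0 hlt
        rw [max_eq_right (by linarith)]; ring
  have hsum : ∀ z, ∑ x, max (D x z - t z) 0 * PYs z x
      = maxProb (PYs z) * ((2:ℝ) ^ n * lam') := by
    intro z
    have h2 : (0:ℝ) < 2 ^ n := by positivity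
    have := hlam' z
    have hS : ∑ x, max (D x z - t z) 0 = (2:ℝ) ^ n * lam' := by
      field_simp at this; linarith
    calc ∑ x, max (D x z - t z) 0 * PYs z x
        = ∑ x, maxProb (PYs z) * max (D x z - t z) 0 := by
          exact Finset.sum_congr rfl fun x _ => hpt z x
      _ = maxProb (PYs z) * ∑ x, max (D x z - t z) 0 := by rw [Finset.mul_sum]
      _ = _ := by rw [hS]
  have key : ∑ z, PZ z * ∑ x, max (D x z - t z) 0 * PYs z x
      = (2:ℝ) ^ n * lam' * ∑ z, PZ z * maxProb (PYs z) := by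
    rw [Finset.mul_sum]
    refine Finset.sum_congr rfl fun z _ => ?_
    rw [hsum z]; ring
  set S := ∑ z, PZ z * maxProb (PYs z) with hSdef
  -- S > 0
  have hSpos : 0 < S := by
    obtain ⟨z0, hz0⟩ : ∃ z, 0 < PZ z := by
      by_contra h
      push_neg at h
      have : ∑ z, PZ z = 0 := Finset.sum_eq_zero fun z _ => le_antisymm (h z) (hPZ.1 z)
      rw [hPZ.2] at this; norm_num at this
    have hmax : 0 < maxProb (PYs z0) := by
      obtain ⟨x0, hx0⟩ : ∃ x, 0 < PYs z0 x := by
        by_contra h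
        push_neg at h
        have : ∑ x, PYs z0 x = 0 :=
          Finset.sum_eq_zero fun x _ => le_antisymm (h x) ((hPYs z0).1 x)
        rw [(hPYs z0).2] at this; norm_num at this
      exact lt_of_lt_of_le hx0 (le_ciSup (Set.Finite.bddAbove (Set.finite_range _)) x0)
    refine Finset.sum_pos' (fun z _ => mul_nonneg (hPZ.1 z) ?_) ⟨z0, Finset.mem_univ z0, mul_pos hz0 hmax⟩
    obtain ⟨x0⟩ : Nonempty (BS n) := inferInstance
    exact le_trans ((hPYs z).1 x0) (le_ciSup (Set.Finite.bddAbove (Set.finite_range _)) x0)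
  have hlog : Real.logb 2 S = -k := by
    unfold avgMinEntropy at hent; rw [← hSdef] at hent; linarith
  have hSval : S = (2:ℝ) ^ (-k : ℝ) := by
    rw [← hlog, Real.rpow_logb (by norm_num) (by norm_num) hSpos]
  rw [key, hSval]
  rw [show ((2:ℝ) ^ n : ℝ) = (2:ℝ) ^ (n : ℝ) from (Real.rpow_natCast 2 n).symm,
    mul_right_comm, ← Real.rpow_add (by norm_num : (0:ℝ) < 2), ← sub_eq_add_neg]
end

section
/- Let a > 0 and ℓ be real numbers with ℓ ≥ 1 + 1/a, and define h(s) = (1 − (1−s)^ℓ)·(1 + a·s^{−1}) for s ∈ (0,1]. Then h(s) ≥ 1 + a for all s ∈ (0,1], and h(1) = 1 + a. -/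
open Real

/-- Key AM-GM step: for `u ∈ (0,1]`, `a > 0`, `u^{1/a} * (1+a-u) ≤ a`. -/
lemma aux_amgm (a u : ℝ) (ha : 0 < a) (hu : 0 < u) (hu1 : u ≤ 1) :
    u ^ (1 / a) * (1 + a - u) ≤ a := by
  have h1a : (0:ℝ) < 1 + a := by linarith
  have hp2 : 0 ≤ (1 + a - u) / a := div_nonneg (by linarith) ha.le
  have hw : 1 / (1 + a) + a / (1 + a) = 1 := by field_simp
  have key := Real.geom_mean_le_arith_mean2_weighted
    (by positivity : (0:ℝ) ≤ 1 / (1 + a)) (by positivity : (0:ℝ) ≤ a / (1 + a))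
    hu.le hp2 hw
  have hsum : 1 / (1 + a) * u + a / (1 + a) * ((1 + a - u) / a) = 1 := by
    field_simp; ring
  rw [hsum] at key
  -- raise to the power (1+a)/a
  have hpos : 0 ≤ u ^ (1 / (1 + a)) * ((1 + a - u) / a) ^ (a / (1 + a)) := by positivity
  have hc : (0:ℝ) ≤ (1 + a) / a := by positivity
  have key2 : (u ^ (1 / (1 + a)) * ((1 + a - u) / a) ^ (a / (1 + a))) ^ ((1 + a) / a) ≤ 1 :=
    Real.rpow_le_one hpos key hc
  rw [Real.mul_rpow (by positivity) (by positivity),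
    ← Real.rpow_mul hu.le, ← Real.rpow_mul hp2] at key2
  have e1 : 1 / (1 + a) * ((1 + a) / a) = 1 / a := by field_simp
  have e2 : a / (1 + a) * ((1 + a) / a) = 1 := by field_simp
  rw [e1, e2, Real.rpow_one] at key2
  calc u ^ (1 / a) * (1 + a - u) = (u ^ (1 / a) * ((1 + a - u) / a)) * a := by
        field_simp
    _ ≤ 1 * a := by
        apply mul_le_mul_of_nonneg_right _ ha.le
        simpa using key2
    _ = a := one_mul a

/-- For `a > 0` and `ℓ ≥ 1 + 1/a`, the function
`h(s) = (1 − (1−s)^ℓ)·(1 + a·s⁻¹)` satisfies `h(s) ≥ 1 + a` on `(0,1]`,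
with equality `h(1) = 1 + a`. -/
theorem stmt_7 (a l : ℝ) (ha : 0 < a) (hl : 1 + 1 / a ≤ l) :
    (∀ s ∈ Set.Ioc (0:ℝ) 1, 1 + a ≤ (1 - (1 - s) ^ l) * (1 + a * s⁻¹)) ∧
    (1 - (1 - (1:ℝ)) ^ l) * (1 + a * (1:ℝ)⁻¹) = 1 + a := by
  have hl0 : 0 < l := lt_of_lt_of_le (by positivity) hl
  constructor
  · rintro s ⟨hs0, hs1⟩
    set u := 1 - s with hu
    have hu0 : 0 ≤ u := by simp [hu]; linarith
    have hu1 : u < 1 := by simp [hu]; linarith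
    -- key: u^l * (s + a) ≤ a * u
    have key : u ^ l * (s + a) ≤ a * u := by
      rcases eq_or_lt_of_le hu0 with h0 | h0
      · rw [← h0, Real.zero_rpow hl0.ne']; simp
      · have hul : u ^ l = u * u ^ (l - 1) := by
          conv_lhs => rw [show l = 1 + (l - 1) by ring, Real.rpow_add h0, Real.rpow_one]
        have hle : u ^ (l - 1) ≤ u ^ (1 / a) :=
          Real.rpow_le_rpow_of_exponent_ge h0 hu1.le (by linarith)
        have hsa : s + a = 1 + a - u := by simp [hu]; ring
        have := aux_amgm a u ha h0 hu1.le
        calc u ^ l * (s + a) = u * (u ^ (l - 1) * (1 + a - u)) := by rw [hul, hsa]; ring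
          _ ≤ u * (u ^ (1 / a) * (1 + a - u)) := by
              apply mul_le_mul_of_nonneg_left _ h0.le
              apply mul_le_mul_of_nonneg_right hle (by linarith)
          _ ≤ u * a := mul_le_mul_of_nonneg_left this h0.le
          _ = a * u := mul_comm _ _
    -- convert to the goal: multiply out by s > 0
    have expand : (1 - u ^ l) * (1 + a * s⁻¹) - (1 + a) =
        (a * u - u ^ l * (s + a)) / s := by
      rw [hu]
      field_simp
      ring
    have hnn : 0 ≤ (a * u - u ^ l * (s + a)) / s :=
      div_nonneg (by linarith) hs0.le
    linarith
  · simp [Real.zero_rpow hl0.ne']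
end

section
/- Let n, m be positive integers, D : {0,1}^n × {0,1}^m → [0,1], let Y*|Z be a conditional distribution over {0,1}^n given a random variable Z on {0,1}^m, and let t(z) be real numbers such that conditions (b), (c), (d) of the maximizer characterization hold. Then for every z: (i) the set {x : D(x,z) ≥ t(z)} is nonempty and 1/#{x : D(x,z) ≥ t(z)} ≤ max_x P_{Y*|Z=z}(x); and (ii) if {x : D(x,z) > t(z)} is nonempty, then max_x P_{Y*|Z=z}(x) ≤ 1/#{x : D(x,z) > t(z)}. -/
open Finset

/-- Bounds relating the maximal probability of `Y*|Z=z` to the number of points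
on which the distinguisher is above (resp. strictly above) the threshold. -/
theorem stmt_12 (n m : ℕ) (hn : 0 < n) (hm : 0 < m)
    (D : BS n → BS m → ℝ) (hD : ∀ x z, D x z ∈ Set.Icc (0:ℝ) 1)
    (PYs : BS m → BS n → ℝ) (hPYs : IsCondDist PYs)
    (t : BS m → ℝ)
    (hcondb : ∀ z x, 0 < PYs z x → PYs z x < maxProb (PYs z) → D x z = t z)
    (hcondc : ∀ z x, PYs z x = 0 → D x z ≤ t z)
    (hcondd : ∀ z x, PYs z x = maxProb (PYs z) → t z ≤ D x z) :
    ∀ z : BS m,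
      ((Finset.univ.filter (fun x : BS n => t z ≤ D x z)).Nonempty ∧
        (1 : ℝ) / (Finset.univ.filter (fun x : BS n => t z ≤ D x z)).card ≤
          maxProb (PYs z)) ∧
      ((Finset.univ.filter (fun x : BS n => t z < D x z)).Nonempty →
        maxProb (PYs z) ≤
          (1 : ℝ) / (Finset.univ.filter (fun x : BS n => t z < D x z)).card) := by
  intro z
  obtain ⟨hnn, hsum⟩ := hPYs z
  set p := PYs z with hp
  -- maximum is attained
  obtain ⟨a, ha⟩ := Finite.exists_max p
  have hM : maxProb p = p a :=
    le_antisymm (ciSup_le ha) (le_ciSup (Finite.bddAbove_range p) a)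
  -- max is positive
  have hMpos : 0 < maxProb p := by
    by_contra h
    push_neg at h
    have : ∀ x, p x = 0 := fun x => le_antisymm (le_trans (ha x) (hM ▸ h)) (hnn x)
    simp [this] at hsum
  set A := Finset.univ.filter (fun x : BS n => t z ≤ D x z) with hA
  set B := Finset.univ.filter (fun x : BS n => t z < D x z) with hB
  have haA : a ∈ A := by
    simp only [hA, Finset.mem_filter, Finset.mem_univ, true_and]
    exact hcondd z a hM.symm
  have hAne : A.Nonempty := ⟨a, haA⟩
  have hsupp : ∀ x, 0 < p x → x ∈ A := by
    intro x hx
    simp only [hA, Finset.mem_filter, Finset.mem_univ, true_and]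
    rcases lt_or_eq_of_le (ha x) with h | h
    · exact le_of_eq (hcondb z x hx (hM ▸ h)).symm
    · exact hcondd z x (h.trans hM.symm)
  constructor
  · refine ⟨hAne, ?_⟩
    have h1 : (1 : ℝ) ≤ A.card * maxProb p := by
      have hsplit := Finset.sum_filter_add_sum_filter_not Finset.univ
        (fun x : BS n => t z ≤ D x z) p
      have hz : ∑ x ∈ Finset.univ.filter (fun x : BS n => ¬ t z ≤ D x z), p x = 0 := by
        apply Finset.sum_eq_zero
        intro x hx
        simp only [Finset.mem_filter] at hx
        by_contra h
        exact hx.2 ((Finset.mem_filter.mp (hsupp x (lt_of_le_of_ne (hnn x) (Ne.symm h)))).2)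
      have : ∑ x ∈ A, p x = 1 := by
        rw [← hsplit, hz, add_zero] at hsum; exact hsum
      calc (1:ℝ) = ∑ x ∈ A, p x := this.symm
        _ ≤ ∑ _x ∈ A, maxProb p := Finset.sum_le_sum (fun x _ => hM ▸ ha x)
        _ = A.card * maxProb p := by rw [Finset.sum_const, nsmul_eq_mul]
    have hcard : (0:ℝ) < A.card := by
      exact_mod_cast Finset.card_pos.mpr hAne
    rw [div_le_iff₀ hcard]
    linarith [h1]
  · intro hBne
    have hBM : ∀ x ∈ B, p x = maxProb p := by
      intro x hx
      simp only [hB, Finset.mem_filter, Finset.mem_univ, true_and] at hx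
      have hpx : 0 < p x := by
        rcases lt_or_eq_of_le (hnn x) with h | h
        · exact h
        · exact absurd (hcondc z x h.symm) (not_le.mpr hx)
      rcases lt_or_eq_of_le (ha x) with h | h
      · exact absurd (hcondb z x hpx (hM ▸ h)) (ne_of_gt hx)
      · exact hM ▸ h
    have h2 : (B.card : ℝ) * maxProb p ≤ 1 := by
      calc (B.card : ℝ) * maxProb p = ∑ x ∈ B, p x := by
            rw [Finset.sum_congr rfl hBM, Finset.sum_const, nsmul_eq_mul]
        _ ≤ ∑ x, p x := Finset.sum_le_sum_of_subset_of_nonneg (Finset.subset_univ B)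
            (fun x _ _ => hnn x)
        _ = 1 := hsum
    have hcard : (0:ℝ) < B.card := by
      exact_mod_cast Finset.card_pos.mpr hBne
    rw [le_div_iff₀ hcard]
    linarith [h2]
end

section
/- Let n be a positive integer, let D : {0,1}^n → {0,1} be a boolean function, let X be a probability distribution on {0,1}^n, let ε > 0 and let k ∈ ℝ with 0 ≤ k ≤ n. Suppose that E D(X) − E D(Y) ≥ ε for every probability distribution Y on {0,1}^n with H∞(Y) ≥ k. Let D₁ = {x ∈ {0,1}^n : D(x) = 1}. Then D₁ is nonempty, |D₁| ≤ 2^k, and (∑_{x∈D₁} P_X(x))/|D₁| ≥ 2^{−k} + ε/|D₁| > 2^{−k}; in other words, guessing X by a uniformly random element of D₁ succeeds with probability strictly greater than 2^{−k}. -/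
open Finset

lemma maxProb_le {α : Type*} [Fintype α] [Nonempty α] {p : α → ℝ} {c : ℝ}
    (h : ∀ a, p a ≤ c) : maxProb p ≤ c := ciSup_le h

lemma entropy_of_bound {x k : ℝ} (hx : 0 < x) (h : x ≤ (2:ℝ) ^ (-k)) :
    k ≤ - Real.logb 2 x := by
  have := (Real.logb_le_iff_le_rpow (b := 2) (by norm_num) hx).mpr h
  linarith

/-- If a boolean distinguisher `D` has advantage `ε` against all distributions
of min-entropy at least `k`, then guessing `X` by a uniformly random element of
`D₁ = {x : D(x) = 1}` succeeds with probability at least `2^{−k} + ε/|D₁|`,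
which is strictly greater than `2^{−k}`; moreover `D₁` is nonempty and
`|D₁| ≤ 2^k`. -/
theorem stmt_16 (n : ℕ) (hn : 0 < n) (D : BS n → Bool)
    (PX : BS n → ℝ) (hPX : IsDist PX)
    (ε k : ℝ) (hε : 0 < ε) (hk0 : 0 ≤ k) (hkn : k ≤ n)
    (hdist : ∀ PY : BS n → ℝ, IsDist PY →
      k ≤ - Real.logb 2 (maxProb PY) →
      (∑ x, PX x * (if D x then (1:ℝ) else 0)) -
        (∑ x, PY x * (if D x then (1:ℝ) else 0)) ≥ ε) :
    (Finset.univ.filter (fun x : BS n => D x = true)).Nonempty ∧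
    ((Finset.univ.filter (fun x : BS n => D x = true)).card : ℝ) ≤ (2:ℝ) ^ k ∧
    (2:ℝ) ^ (-k) +
        ε / (Finset.univ.filter (fun x : BS n => D x = true)).card ≤
      (∑ x ∈ Finset.univ.filter (fun x : BS n => D x = true), PX x) /
        (Finset.univ.filter (fun x : BS n => D x = true)).card ∧
    (2:ℝ) ^ (-k) <
      (∑ x ∈ Finset.univ.filter (fun x : BS n => D x = true), PX x) /
        (Finset.univ.filter (fun x : BS n => D x = true)).card := by
  classical
  set S : Finset (BS n) := Finset.univ.filter (fun x : BS n => D x = true) with hS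
  set T : Finset (BS n) := Finset.univ.filter (fun x : BS n => ¬ (D x = true)) with hT
  have key : ∀ f : BS n → ℝ,
      (∑ x, f x * (if D x then (1:ℝ) else 0)) = ∑ x ∈ S, f x := by
    intro f
    rw [hS, Finset.sum_filter]
    apply Finset.sum_congr rfl
    intro x _
    by_cases h : D x <;> simp [h]
  have sumS : ∀ u v : ℝ, (∑ x ∈ S, (if D x then u else v)) = (S.card : ℝ) * u := by
    intro u v
    calc (∑ x ∈ S, (if D x then u else v)) = ∑ _x ∈ S, u := by
          apply Finset.sum_congr rfl
          intro x hx
          rw [hS, Finset.mem_filter] at hx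
          simp [hx.2]
      _ = (S.card : ℝ) * u := by rw [Finset.sum_const, nsmul_eq_mul]
  have sumT : ∀ u v : ℝ, (∑ x ∈ T, (if D x then u else v)) = (T.card : ℝ) * v := by
    intro u v
    calc (∑ x ∈ T, (if D x then u else v)) = ∑ _x ∈ T, v := by
          apply Finset.sum_congr rfl
          intro x hx
          rw [hT, Finset.mem_filter] at hx
          simp [hx.2]
      _ = (T.card : ℝ) * v := by rw [Finset.sum_const, nsmul_eq_mul]
  have split : ∀ u v : ℝ,
      (∑ x : BS n, (if D x then u else v)) = (S.card : ℝ) * u + (T.card : ℝ) * v := by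
    intro u v
    rw [← Finset.sum_filter_add_sum_filter_not Finset.univ (fun x => D x = true), ← hS, ← hT,
      sumS, sumT]
  have hcardBS : (Fintype.card (BS n) : ℝ) = (2:ℝ) ^ (n:ℝ) := by
    rw [show Fintype.card (BS n) = 2 ^ n by simp [BS]]
    push_cast
    rw [Real.rpow_natCast]
  have h2n_pos : (0:ℝ) < (2:ℝ) ^ (n:ℝ) := Real.rpow_pos_of_pos (by norm_num) _
  have h2k_pos : (0:ℝ) < (2:ℝ) ^ k := Real.rpow_pos_of_pos (by norm_num) _
  have h2mk_pos : (0:ℝ) < (2:ℝ) ^ (-k) := Real.rpow_pos_of_pos (by norm_num) _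
  have hST : (S.card : ℝ) + (T.card : ℝ) = (2:ℝ) ^ (n:ℝ) := by
    rw [← hcardBS]
    have := Finset.card_filter_add_card_filter_not
      (s := (Finset.univ : Finset (BS n))) (p := fun x : BS n => D x = true)
    rw [← Finset.card_univ, hS, hT]
    exact_mod_cast this
  -- Step 1: S is nonempty
  have hSne : S.Nonempty := by
    by_contra hemp
    rw [Finset.not_nonempty_iff_eq_empty] at hemp
    set PU : BS n → ℝ := fun _ => ((2:ℝ) ^ (n:ℝ))⁻¹ with hPU
    have hUdist : IsDist PU := by
      constructor
      · intro a; rw [hPU]; positivity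
      · rw [hPU, Finset.sum_const, nsmul_eq_mul, ← hcardBS, Finset.card_univ,
          hcardBS, mul_inv_cancel₀ (ne_of_gt h2n_pos)]
    have hUent : k ≤ - Real.logb 2 (maxProb PU) := by
      have hle' : ((2:ℝ) ^ (n:ℝ))⁻¹ ≤ maxProb PU := le_maxProb PU (Classical.arbitrary _)
      apply entropy_of_bound (lt_of_lt_of_le (by positivity) hle')
      apply maxProb_le
      intro a
      rw [hPU, ← Real.rpow_neg (by norm_num)]
      exact Real.rpow_le_rpow_of_exponent_le (by norm_num) (by linarith)
    have := hdist PU hUdist hUent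
    rw [key, key, hemp] at this
    simp only [Finset.sum_empty] at this
    linarith
  have hNpos : (0:ℝ) < (S.card : ℝ) := by
    exact_mod_cast Finset.card_pos.mpr hSne
  have hXle1 : (∑ x ∈ S, PX x) ≤ 1 := by
    rw [← hPX.2]
    exact Finset.sum_le_sum_of_subset_of_nonneg (Finset.subset_univ S)
      (fun x _ _ => hPX.1 x)
  -- Step 2: card ≤ 2^k
  have hcard : ((S.card : ℝ)) ≤ (2:ℝ) ^ k := by
    by_contra hlt
    push_neg at hlt
    set PY : BS n → ℝ := fun x => if D x then ((S.card : ℝ))⁻¹ else 0 with hPY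
    have hYdist : IsDist PY := by
      constructor
      · intro a; rw [hPY]; dsimp only; split <;> positivity
      · rw [hPY]
        dsimp only
        rw [split, mul_inv_cancel₀ (ne_of_gt hNpos), mul_zero, add_zero]
    have hYent : k ≤ - Real.logb 2 (maxProb PY) := by
      apply entropy_of_bound
      · obtain ⟨a, ha⟩ := hSne
        rw [hS, Finset.mem_filter] at ha
        calc (0:ℝ) < ((S.card : ℝ))⁻¹ := by positivity
          _ = PY a := by rw [hPY]; simp [ha.2]
          _ ≤ maxProb PY := le_maxProb PY a
      · apply maxProb_le
        intro a
        rw [hPY]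
        dsimp only
        have hinv : ((S.card : ℝ))⁻¹ ≤ (2:ℝ) ^ (-k) := by
          rw [Real.rpow_neg (by norm_num)]
          exact inv_anti₀ h2k_pos hlt.le
        split
        · exact hinv
        · positivity
    have := hdist PY hYdist hYent
    rw [key, key] at this
    have hEY : (∑ x ∈ S, PY x) = 1 := by
      rw [hPY]
      dsimp only
      rw [sumS, mul_inv_cancel₀ (ne_of_gt hNpos)]
    rw [hEY] at this
    linarith
  -- Step 3: main bound
  set c : ℝ := (1 - (S.card : ℝ) * (2:ℝ) ^ (-k)) / (T.card : ℝ) with hc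
  have hmass_le : (S.card : ℝ) * (2:ℝ) ^ (-k) ≤ 1 := by
    rw [Real.rpow_neg (by norm_num), mul_inv_le_iff₀ h2k_pos, one_mul]
    exact hcard
  have hc_nonneg : 0 ≤ c := by
    rw [hc]
    apply div_nonneg (by linarith) (by positivity)
  have h1le : (1:ℝ) ≤ (2:ℝ) ^ ((n:ℝ) - k) := by
    rw [show (1:ℝ) = (2:ℝ) ^ (0:ℝ) by simp]
    exact Real.rpow_le_rpow_of_exponent_le (by norm_num) (by linarith)
  have hc_le : c ≤ (2:ℝ) ^ (-k) := by
    rcases Nat.eq_zero_or_pos T.card with hT0 | hT0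
    · rw [hc, hT0]
      simp only [Nat.cast_zero, div_zero]
      positivity
    · have hTpos : (0:ℝ) < (T.card : ℝ) := by exact_mod_cast hT0
      rw [hc, div_le_iff₀ hTpos]
      have hprod : (2:ℝ) ^ (-k) * ((S.card : ℝ) + (T.card : ℝ)) = (2:ℝ) ^ ((n:ℝ) - k) := by
        rw [hST, ← Real.rpow_add (by norm_num)]
        ring_nf
      nlinarith
  set PY : BS n → ℝ := fun x => if D x then (2:ℝ) ^ (-k) else c with hPY
  have hsum_eq : (∑ x ∈ S, PY x) = (S.card : ℝ) * (2:ℝ) ^ (-k) := by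
    rw [hPY]; dsimp only; rw [sumS]
  have hYdist : IsDist PY := by
    constructor
    · intro a
      rw [hPY]; dsimp only; split
      · positivity
      · exact hc_nonneg
    · rw [hPY]
      dsimp only
      rw [split]
      rcases Nat.eq_zero_or_pos T.card with hT0 | hT0
      · have hTc : (T.card : ℝ) = 0 := by exact_mod_cast hT0
        have hScard : (S.card : ℝ) = (2:ℝ) ^ (n:ℝ) := by linarith
        have hge : (1:ℝ) ≤ (S.card : ℝ) * (2:ℝ) ^ (-k) := by
          rw [hScard, ← Real.rpow_add (by norm_num)]
          rw [show (n:ℝ) + -k = (n:ℝ) - k by ring]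
          exact h1le
        rw [hTc]
        linarith
      · have hTpos : (0:ℝ) < (T.card : ℝ) := by exact_mod_cast hT0
        rw [hc, mul_comm ((T.card : ℝ)), div_mul_cancel₀ _ (ne_of_gt hTpos)]
        ring
  have hYent : k ≤ - Real.logb 2 (maxProb PY) := by
    apply entropy_of_bound
    · obtain ⟨a, ha⟩ := hSne
      rw [hS, Finset.mem_filter] at ha
      calc (0:ℝ) < (2:ℝ) ^ (-k) := h2mk_pos
        _ = PY a := by rw [hPY]; simp [ha.2]
        _ ≤ maxProb PY := le_maxProb PY a
    · apply maxProb_le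
      intro a
      rw [hPY]; dsimp only; split
      · exact le_refl _
      · exact hc_le
  have hfinal := hdist PY hYdist hYent
  rw [key, key, hsum_eq] at hfinal
  have hmain : (2:ℝ) ^ (-k) + ε / (S.card : ℝ) ≤ (∑ x ∈ S, PX x) / (S.card : ℝ) := by
    rw [le_div_iff₀ hNpos, add_mul, div_mul_cancel₀ _ (ne_of_gt hNpos)]
    nlinarith
  refine ⟨hSne, hcard, hmain, ?_⟩
  have hpos : 0 < ε / (S.card : ℝ) := by positivity
  linarith
end
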